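/- arXiv:math/0210460 — 3 statements merged into one kernel-verified Lean document; each statement's English description precedes it below -/
import Mathlib

section
/- Let τ, λ be twistings of C and v : C → H a linear map satisfying ε_H ∘ v = ε_C, v(c·h) = S(h₁)v(c)h₂, and c_{1,(-1)}v(c₂)₁ ⊗ c_{1,(0)}·v(c₂)₂ = v(c₁)c_{2,-1} ⊗ c_{2,0,1}·v(c_{2,0,2}), where τ(c) = c_{-1} ⊗ c_0 and λ(c) = c_{(-1)} ⊗ c_{(0)}. Then ψ : C^τ → C^λ defined by ψ(c) = c₁ · v(c₂) is a right H-linear coalgebra map, i.e. ψ(c·h) = ψ(c)·h, ε(ψ(c)) = ε(c), and Δ_λ(ψ(c)) = (ψ ⊗ ψ)(Δ_τ(c)). -/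
open TensorProduct LinearMap Coalgebra

noncomputable section

variable (k : Type) [Field k]
variable (H : Type) [Ring H] [HopfAlgebra k H]
variable (C : Type) [AddCommGroup C] [Module k C] [Coalgebra k C]

namespace TwistPaper

/-- The convolution-type product on `Hom(C, H ⊗ C)`:
`(τ * ν)(c) = (m_H ⊗ id_C)((id_H ⊗ ν)(τ c))`. -/
def convT (τ ν : C →ₗ[k] H ⊗[k] C) : C →ₗ[k] H ⊗[k] C :=
  TensorProduct.map (LinearMap.mul' k H) LinearMap.id
    ∘ₗ (TensorProduct.assoc k H H C).symm.toLinearMap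
    ∘ₗ TensorProduct.map LinearMap.id ν ∘ₗ τ

/-- The unit `σ(c) = 1 ⊗ c`. -/
def sigmaT : C →ₗ[k] H ⊗[k] C := TensorProduct.mk k H C 1

/-- `C` is a right `H`-module coalgebra via the action `act : C ⊗ H → C`. -/
def IsModuleCoalg (act : C ⊗[k] H →ₗ[k] C) : Prop :=
  (∀ c : C, act (c ⊗ₜ (1 : H)) = c) ∧
  (∀ (c : C) (g h : H), act (act (c ⊗ₜ g) ⊗ₜ h) = act (c ⊗ₜ (g * h))) ∧
  (Coalgebra.comul ∘ₗ act
    = TensorProduct.map act act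
      ∘ₗ (TensorProduct.tensorTensorTensorComm k C C H H).toLinearMap
      ∘ₗ TensorProduct.map Coalgebra.comul Coalgebra.comul) ∧
  ((Coalgebra.counit : C →ₗ[k] k) ∘ₗ act
    = (TensorProduct.lid k k).toLinearMap
      ∘ₗ TensorProduct.map Coalgebra.counit Coalgebra.counit)

variable (act : C ⊗[k] H →ₗ[k] C)

/-- Left-hand side of (6): `c ⊗ h ↦ c₋₁h₁ ⊗ c₀·h₂`. -/
def eq6L (τ : C →ₗ[k] H ⊗[k] C) : C ⊗[k] H →ₗ[k] H ⊗[k] C :=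
  TensorProduct.map (LinearMap.mul' k H) act
    ∘ₗ (TensorProduct.tensorTensorTensorComm k H C H H).toLinearMap
    ∘ₗ TensorProduct.map τ Coalgebra.comul

/-- Right-hand side of (6): `c ⊗ h ↦ h₁(c·h₂)₋₁ ⊗ (c·h₂)₀`. -/
def eq6R (τ : C →ₗ[k] H ⊗[k] C) : C ⊗[k] H →ₗ[k] H ⊗[k] C :=
  TensorProduct.map (LinearMap.mul' k H) LinearMap.id
    ∘ₗ (TensorProduct.assoc k H H C).symm.toLinearMap
    ∘ₗ TensorProduct.map LinearMap.id (τ ∘ₗ act)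
    ∘ₗ (TensorProduct.leftComm k C H H).toLinearMap
    ∘ₗ TensorProduct.map LinearMap.id Coalgebra.comul

/-- The twisted comultiplication `Δ_τ(c) = c₁·c₂₋₁ ⊗ c₂₀`. -/
def DeltaT (τ : C →ₗ[k] H ⊗[k] C) : C →ₗ[k] C ⊗[k] C :=
  TensorProduct.map act LinearMap.id
    ∘ₗ (TensorProduct.assoc k C H C).symm.toLinearMap
    ∘ₗ TensorProduct.map LinearMap.id τ ∘ₗ Coalgebra.comul

/-- Left-hand side of (7). -/
def eq7L (τ : C →ₗ[k] H ⊗[k] C) : C →ₗ[k] H ⊗[k] (C ⊗[k] C) :=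
  TensorProduct.map LinearMap.id (DeltaT k H C act τ) ∘ₗ τ

/-- Right-hand side of (7). -/
def eq7R (τ : C →ₗ[k] H ⊗[k] C) : C →ₗ[k] H ⊗[k] (C ⊗[k] C) :=
  (TensorProduct.assoc k H C C).toLinearMap
    ∘ₗ TensorProduct.map
        (TensorProduct.map (LinearMap.mul' k H) act
          ∘ₗ (TensorProduct.tensorTensorTensorComm k H C H H).toLinearMap)
        LinearMap.id
    ∘ₗ (TensorProduct.assoc k (H ⊗[k] C) (H ⊗[k] H) C).symm.toLinearMap
    ∘ₗ TensorProduct.map LinearMap.id (TensorProduct.map Coalgebra.comul LinearMap.id)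
    ∘ₗ TensorProduct.map τ τ ∘ₗ Coalgebra.comul

/-- `τ : C → H ⊗ C` is a twisting of the right `H`-module coalgebra `(C, act)`. -/
def IsTwisting (τ : C →ₗ[k] H ⊗[k] C) : Prop :=
  ((TensorProduct.rid k H).toLinearMap ∘ₗ TensorProduct.map LinearMap.id Coalgebra.counit ∘ₗ τ
    = Algebra.linearMap k H ∘ₗ Coalgebra.counit) ∧
  ((TensorProduct.lid k C).toLinearMap ∘ₗ TensorProduct.map Coalgebra.counit LinearMap.id ∘ₗ τ
    = LinearMap.id) ∧
  (eq6L k H C act τ = eq6R k H C act τ) ∧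
  (eq7L k H C act τ = eq7R k H C act τ)

end TwistPaper

namespace TwistPaper

variable (ρ : C →ₗ[k] H ⊗[k] C) (α : C →ₗ[k] H ⊗[k] H)

/-- Iterated comultiplication `c ↦ c₁ ⊗ (c₂ ⊗ c₃)`. -/
def comul₂ : C →ₗ[k] C ⊗[k] (C ⊗[k] C) :=
  TensorProduct.map LinearMap.id Coalgebra.comul ∘ₗ Coalgebra.comul

/-- `ρ` is a weak coaction of `H` on `C` (conditions (14)–(16)). -/
def IsWeakCoaction : Prop :=
  (TensorProduct.map LinearMap.id Coalgebra.comul ∘ₗ ρ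
    = TensorProduct.map (LinearMap.mul' k H) LinearMap.id
        ∘ₗ (TensorProduct.tensorTensorTensorComm k H C H C).toLinearMap
        ∘ₗ TensorProduct.map ρ ρ ∘ₗ Coalgebra.comul) ∧
  ((TensorProduct.rid k H).toLinearMap ∘ₗ TensorProduct.map LinearMap.id Coalgebra.counit ∘ₗ ρ
    = Algebra.linearMap k H ∘ₗ Coalgebra.counit) ∧
  ((TensorProduct.lid k C).toLinearMap ∘ₗ TensorProduct.map Coalgebra.counit LinearMap.id ∘ₗ ρ
    = LinearMap.id)

/-- The counit condition (I) on `α : C → H ⊗ H`. -/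
def CocycleCounit : Prop :=
  ((TensorProduct.lid k H).toLinearMap ∘ₗ TensorProduct.map Coalgebra.counit LinearMap.id ∘ₗ α
    = Algebra.linearMap k H ∘ₗ Coalgebra.counit) ∧
  ((TensorProduct.rid k H).toLinearMap ∘ₗ TensorProduct.map LinearMap.id Coalgebra.counit ∘ₗ α
    = Algebra.linearMap k H ∘ₗ Coalgebra.counit)

/-- `(c ⊗ 1) ⋊ h`-free part of the crossed coproduct:
`ψ(c) = (c₁ ⊗ c₂₍₋₁₎α₁(c₃)) ⊗ (c₂₍₀₎ ⊗ α₂(c₃))`. -/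
def psiMap : C →ₗ[k] (C ⊗[k] H) ⊗[k] (C ⊗[k] H) :=
  (TensorProduct.assoc k C H (C ⊗[k] H)).symm.toLinearMap
    ∘ₗ TensorProduct.map LinearMap.id
        (TensorProduct.map (LinearMap.mul' k H) LinearMap.id
          ∘ₗ (TensorProduct.tensorTensorTensorComm k H C H H).toLinearMap
          ∘ₗ TensorProduct.map ρ α)
    ∘ₗ comul₂ k C

/-- Right multiplication by `H` on the second tensorand of `C ⊗ H`. -/
def m2 : (C ⊗[k] H) ⊗[k] H →ₗ[k] C ⊗[k] H :=
  TensorProduct.map LinearMap.id (LinearMap.mul' k H)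
    ∘ₗ (TensorProduct.assoc k C H H).toLinearMap

/-- The crossed coproduct comultiplication
`Δ_α(c ⊗ h) = (c₁ ⊗ c₂₍₋₁₎α₁(c₃)h₁) ⊗ (c₂₍₀₎ ⊗ α₂(c₃)h₂)`. -/
def DeltaAl : C ⊗[k] H →ₗ[k] (C ⊗[k] H) ⊗[k] (C ⊗[k] H) :=
  TensorProduct.map (m2 k H C) (m2 k H C)
    ∘ₗ (TensorProduct.tensorTensorTensorComm k (C ⊗[k] H) (C ⊗[k] H) H H).toLinearMap
    ∘ₗ TensorProduct.map (psiMap k H C ρ α) Coalgebra.comul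

/-- The crossed coproduct counit `ε_α(c ⊗ h) = ε(c)ε(h)`. -/
def epsAl : C ⊗[k] H →ₗ[k] k :=
  (TensorProduct.lid k k).toLinearMap
    ∘ₗ TensorProduct.map Coalgebra.counit Coalgebra.counit

/-- `(x ⊗ y) ⊗ z ↦ xz ⊗ y` on `(H ⊗ C) ⊗ H`. -/
def rAct : (H ⊗[k] C) ⊗[k] H →ₗ[k] H ⊗[k] C :=
  TensorProduct.map (LinearMap.mul' k H) LinearMap.id
    ∘ₗ (TensorProduct.assoc k H H C).symm.toLinearMap
    ∘ₗ TensorProduct.map LinearMap.id (TensorProduct.comm k C H).toLinearMap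
    ∘ₗ (TensorProduct.assoc k H C H).toLinearMap

/-- Left-hand side of the cocycle condition (II). -/
def eqIIL : C →ₗ[k] H ⊗[k] (H ⊗[k] H) :=
  LinearMap.mul' k (H ⊗[k] (H ⊗[k] H))
    ∘ₗ TensorProduct.map
        (TensorProduct.map LinearMap.id α ∘ₗ ρ)
        (TensorProduct.map LinearMap.id Coalgebra.comul ∘ₗ α)
    ∘ₗ Coalgebra.comul

/-- Right-hand side of the cocycle condition (II). -/
def eqIIR : C →ₗ[k] H ⊗[k] (H ⊗[k] H) :=
  LinearMap.mul' k (H ⊗[k] (H ⊗[k] H))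
    ∘ₗ TensorProduct.map
        (TensorProduct.map LinearMap.id ((TensorProduct.mk k H H).flip 1) ∘ₗ α)
        ((TensorProduct.assoc k H H H).toLinearMap
          ∘ₗ TensorProduct.map Coalgebra.comul LinearMap.id ∘ₗ α)
    ∘ₗ Coalgebra.comul

/-- Left-hand side of the twisted comodule condition (III). -/
def eqIIIL : C →ₗ[k] H ⊗[k] (H ⊗[k] C) :=
  TensorProduct.map (LinearMap.mul' k H) (rAct k H C)
    ∘ₗ (TensorProduct.tensorTensorTensorComm k H (H ⊗[k] C) H H).toLinearMap
    ∘ₗ TensorProduct.map (TensorProduct.map LinearMap.id ρ ∘ₗ ρ) α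
    ∘ₗ Coalgebra.comul

/-- Right-hand side of the twisted comodule condition (III). -/
def eqIIIR : C →ₗ[k] H ⊗[k] (H ⊗[k] C) :=
  (TensorProduct.assoc k H H C).toLinearMap
    ∘ₗ TensorProduct.map
        (TensorProduct.map (LinearMap.mul' k H) (LinearMap.mul' k H)
          ∘ₗ (TensorProduct.tensorTensorTensorComm k H H H H).toLinearMap)
        LinearMap.id
    ∘ₗ (TensorProduct.assoc k (H ⊗[k] H) (H ⊗[k] H) C).symm.toLinearMap
    ∘ₗ TensorProduct.map α (TensorProduct.map Coalgebra.comul LinearMap.id ∘ₗ ρ)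
    ∘ₗ Coalgebra.comul

/-- `α` is a Harrison 2-cocycle with respect to the weak coaction `ρ`. -/
def IsHarrison : Prop :=
  CocycleCounit k H C α ∧ eqIIL k H C ρ α = eqIIR k H C α ∧
    eqIIIL k H C ρ α = eqIIIR k H C ρ α

/-- Convolution product on `Hom(C, H)`. -/
def convH (u v : C →ₗ[k] H) : C →ₗ[k] H :=
  LinearMap.mul' k H ∘ₗ TensorProduct.map u v ∘ₗ Coalgebra.comul

/-- The convolution unit `c ↦ ε(c)1`. -/
def unitH : C →ₗ[k] H := Algebra.linearMap k H ∘ₗ Coalgebra.counit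

end TwistPaper

namespace TwistPaper

/-- `x ⊗ (u ⊗ v) ↦ u * x * v` in an algebra `A`. -/
def sandwichA (A : Type) [Ring A] [Algebra k A] : A ⊗[k] (A ⊗[k] A) →ₗ[k] A :=
  LinearMap.mul' k A
    ∘ₗ TensorProduct.map (LinearMap.mul' k A) LinearMap.id
    ∘ₗ (TensorProduct.assoc k A A A).symm.toLinearMap
    ∘ₗ (TensorProduct.leftComm k A A A).toLinearMap

/-- `h ↦ (S(h₁) ⊗ S̄(h₄)) ⊗ (h₂ ⊗ h₃)`. -/
def xiMap (Sb : H →ₗ[k] H) : H →ₗ[k] (H ⊗[k] H) ⊗[k] (H ⊗[k] H) :=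
  TensorProduct.map (TensorProduct.map (HopfAlgebra.antipode k : H →ₗ[k] H) Sb) LinearMap.id
    ∘ₗ (TensorProduct.tensorTensorTensorComm k H H H H).toLinearMap
    ∘ₗ TensorProduct.map LinearMap.id (TensorProduct.comm k H H).toLinearMap
    ∘ₗ TensorProduct.map Coalgebra.comul Coalgebra.comul ∘ₗ Coalgebra.comul

variable (act : C ⊗[k] H →ₗ[k] C)

/-- `(u ⊗ v) ⊗ c ↦ (c·u) ⊗ v`. -/
def g3 : (H ⊗[k] H) ⊗[k] C →ₗ[k] C ⊗[k] H :=
  TensorProduct.map act LinearMap.id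
    ∘ₗ (TensorProduct.assoc k C H H).symm.toLinearMap
    ∘ₗ (TensorProduct.leftComm k H C H).toLinearMap
    ∘ₗ TensorProduct.map LinearMap.id (TensorProduct.comm k H C).toLinearMap
    ∘ₗ (TensorProduct.assoc k H H C).toLinearMap

/-- Left-hand side of the twisted cocycle condition (c). -/
def eqcL (α : C →ₗ[k] H ⊗[k] H) : C →ₗ[k] H ⊗[k] (C ⊗[k] H) :=
  TensorProduct.map LinearMap.id
      (g3 k H C act ∘ₗ (TensorProduct.assoc k H H C).symm.toLinearMap)
    ∘ₗ (TensorProduct.assoc k H H (H ⊗[k] C)).toLinearMap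
    ∘ₗ (TensorProduct.assoc k (H ⊗[k] H) H C).toLinearMap
    ∘ₗ TensorProduct.map
        (TensorProduct.map (LinearMap.mul' k (H ⊗[k] H)) LinearMap.id
          ∘ₗ (TensorProduct.assoc k (H ⊗[k] H) (H ⊗[k] H) H).symm.toLinearMap)
        LinearMap.id
    ∘ₗ TensorProduct.map
        (TensorProduct.map α (TensorProduct.map Coalgebra.comul LinearMap.id ∘ₗ α))
        LinearMap.id
    ∘ₗ (TensorProduct.assoc k C C C).symm.toLinearMap
    ∘ₗ TensorProduct.map LinearMap.id (TensorProduct.comm k C C).toLinearMap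
    ∘ₗ comul₂ k C

/-- Right-hand side of the twisted cocycle condition (c). -/
def eqcR (α : C →ₗ[k] H ⊗[k] H) : C →ₗ[k] H ⊗[k] (C ⊗[k] H) :=
  TensorProduct.map LinearMap.id (g3 k H C act)
    ∘ₗ (TensorProduct.assoc k H (H ⊗[k] H) C).toLinearMap
    ∘ₗ TensorProduct.map
        (TensorProduct.map LinearMap.id
            (LinearMap.mul' k (H ⊗[k] H)
              ∘ₗ (TensorProduct.comm k (H ⊗[k] H) (H ⊗[k] H)).toLinearMap)
          ∘ₗ (TensorProduct.assoc k H (H ⊗[k] H) (H ⊗[k] H)).toLinearMap)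
        LinearMap.id
    ∘ₗ TensorProduct.map
        (TensorProduct.map (TensorProduct.map LinearMap.id Coalgebra.comul ∘ₗ α) α)
        LinearMap.id
    ∘ₗ (TensorProduct.assoc k C C C).symm.toLinearMap
    ∘ₗ TensorProduct.map LinearMap.id (TensorProduct.comm k C C).toLinearMap
    ∘ₗ comul₂ k C

/-- `α : C → H ⊗ H` is a twisted 2-cocycle (Definition 2.1). -/
def IsTwistedCocycle (Sb : H →ₗ[k] H) (α : C →ₗ[k] H ⊗[k] H) : Prop :=
  CocycleCounit k H C α ∧
  (α ∘ₗ act = sandwichA k (H ⊗[k] H) ∘ₗ TensorProduct.map α (xiMap k H Sb)) ∧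
  (eqcL k H C act α = eqcR k H C act α)

/-- `τ_α(c) = α₁(c₁) ⊗ c₂·α₂(c₁)`. -/
def tauAl (α : C →ₗ[k] H ⊗[k] H) : C →ₗ[k] H ⊗[k] C :=
  TensorProduct.map LinearMap.id (act ∘ₗ (TensorProduct.comm k H C).toLinearMap)
    ∘ₗ (TensorProduct.assoc k H H C).toLinearMap
    ∘ₗ TensorProduct.map α LinearMap.id ∘ₗ Coalgebra.comul

end TwistPaper

namespace TwistPaper

variable (act : C ⊗[k] H →ₗ[k] C)

/-- `ψ_v(c) = c₁ · v(c₂)`. -/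
def psiV (v : C →ₗ[k] H) : C →ₗ[k] C :=
  act ∘ₗ TensorProduct.map LinearMap.id v ∘ₗ Coalgebra.comul

/-- Left-hand side of (22): `c ↦ c₁₍₋₁₎v(c₂)₁ ⊗ c₁₍₀₎·v(c₂)₂`. -/
def eq22L (lam : C →ₗ[k] H ⊗[k] C) (v : C →ₗ[k] H) : C →ₗ[k] H ⊗[k] C :=
  TensorProduct.map (LinearMap.mul' k H) act
    ∘ₗ (TensorProduct.tensorTensorTensorComm k H C H H).toLinearMap
    ∘ₗ TensorProduct.map lam (Coalgebra.comul ∘ₗ v) ∘ₗ Coalgebra.comul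

/-- Right-hand side of (22): `c ↦ v(c₁)c₂₋₁ ⊗ c₂₀₁·v(c₂₀₂)`. -/
def eq22R (τ : C →ₗ[k] H ⊗[k] C) (v : C →ₗ[k] H) : C →ₗ[k] H ⊗[k] C :=
  TensorProduct.map (LinearMap.mul' k H) LinearMap.id
    ∘ₗ (TensorProduct.assoc k H H C).symm.toLinearMap
    ∘ₗ TensorProduct.map v (TensorProduct.map LinearMap.id (psiV k H C act v) ∘ₗ τ)
    ∘ₗ Coalgebra.comul

/-- Conditions (20)–(22) on `v : C → H`, relating the twistings `τ` and `lam`. -/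
def VCond (τ lam : C →ₗ[k] H ⊗[k] C) (v : C →ₗ[k] H) : Prop :=
  ((Coalgebra.counit : H →ₗ[k] k) ∘ₗ v = Coalgebra.counit) ∧
  (v ∘ₗ act
    = sandwichA k H
        ∘ₗ TensorProduct.map v
            (TensorProduct.map (HopfAlgebra.antipode k : H →ₗ[k] H) LinearMap.id
              ∘ₗ Coalgebra.comul)) ∧
  (eq22L k H C act lam v = eq22R k H C act τ v)

/-- Equivalence of twistings (Definition 2.4). -/
def TwistEquiv (τ lam : C →ₗ[k] H ⊗[k] C) : Prop :=
  ∃ v w : C →ₗ[k] H,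
    convH k H C v w = unitH k H C ∧ convH k H C w v = unitH k H C ∧
    VCond k H C act τ lam v

end TwistPaper


set_option linter.unusedSectionVars false

namespace TwistPaper

section Generic
variable {k : Type} [Field k]
variable {A : Type} [AddCommMonoid A] [Module k A] [Coalgebra k A]
variable {M : Type} [AddCommMonoid M] [Module k M]

lemma sum_repr_apply (L : A ⊗[k] A →ₗ[k] M) (a : A) :
    ∑ i ∈ (ℛ k a).index, L ((ℛ k a).left i ⊗ₜ[k] (ℛ k a).right i) = L (Coalgebra.comul a) := by
  rw [← map_sum, (ℛ k a).eq]

lemma sum_counit_smul (a : A) :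
    ∑ i ∈ (ℛ k a).index, Coalgebra.counit (R := k) ((ℛ k a).left i) • (ℛ k a).right i = a := by
  have h := congrArg (TensorProduct.lid k A) (Coalgebra.sum_counit_tmul_eq (ℛ k a))
  simp only [map_sum, TensorProduct.lid_tmul, one_smul] at h
  exact h

lemma sum_counit_smul_apply (F : A →ₗ[k] M) (a : A) :
    ∑ i ∈ (ℛ k a).index,
      Coalgebra.counit (R := k) ((ℛ k a).left i) • F ((ℛ k a).right i) = F a := by
  calc ∑ i ∈ (ℛ k a).index, Coalgebra.counit (R := k) ((ℛ k a).left i) • F ((ℛ k a).right i)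
      = ∑ i ∈ (ℛ k a).index, F (Coalgebra.counit (R := k) ((ℛ k a).left i) • (ℛ k a).right i) := by
        simp [map_smul]
    _ = F (∑ i ∈ (ℛ k a).index, Coalgebra.counit (R := k) ((ℛ k a).left i) • (ℛ k a).right i) :=
        (map_sum F _ _).symm
    _ = F a := by rw [sum_counit_smul]

lemma sum3 (G : A ⊗[k] (A ⊗[k] A) →ₗ[k] M) (a : A) :
    ∑ i ∈ (ℛ k a).index, ∑ j ∈ (ℛ k ((ℛ k a).right i)).index,
      G ((ℛ k a).left i ⊗ₜ[k]
        ((ℛ k ((ℛ k a).right i)).left j ⊗ₜ[k] (ℛ k ((ℛ k a).right i)).right j))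
    = ∑ i ∈ (ℛ k a).index, ∑ j ∈ (ℛ k ((ℛ k a).left i)).index,
      G ((ℛ k ((ℛ k a).left i)).left j ⊗ₜ[k]
        ((ℛ k ((ℛ k a).left i)).right j ⊗ₜ[k] (ℛ k a).right i)) := by
  have hL : ∑ i ∈ (ℛ k a).index, ∑ j ∈ (ℛ k ((ℛ k a).right i)).index,
      G ((ℛ k a).left i ⊗ₜ[k]
        ((ℛ k ((ℛ k a).right i)).left j ⊗ₜ[k] (ℛ k ((ℛ k a).right i)).right j))
      = (G ∘ₗ LinearMap.lTensor A (Coalgebra.comul (R := k))) (Coalgebra.comul a) := by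
    rw [← sum_repr_apply (G ∘ₗ LinearMap.lTensor A (Coalgebra.comul (R := k))) a]
    refine Finset.sum_congr rfl fun i _ => ?_
    rw [LinearMap.comp_apply, LinearMap.lTensor_tmul, ← (ℛ k ((ℛ k a).right i)).eq,
      TensorProduct.tmul_sum, map_sum]
  have hR : ∑ i ∈ (ℛ k a).index, ∑ j ∈ (ℛ k ((ℛ k a).left i)).index,
      G ((ℛ k ((ℛ k a).left i)).left j ⊗ₜ[k]
        ((ℛ k ((ℛ k a).left i)).right j ⊗ₜ[k] (ℛ k a).right i))
      = (G ∘ₗ (TensorProduct.assoc k A A A).toLinearMap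
          ∘ₗ LinearMap.rTensor A (Coalgebra.comul (R := k))) (Coalgebra.comul a) := by
    rw [← sum_repr_apply (G ∘ₗ (TensorProduct.assoc k A A A).toLinearMap
          ∘ₗ LinearMap.rTensor A (Coalgebra.comul (R := k))) a]
    refine Finset.sum_congr rfl fun i _ => ?_
    rw [LinearMap.comp_apply, LinearMap.comp_apply, LinearMap.rTensor_tmul,
      ← (ℛ k ((ℛ k a).left i)).eq, TensorProduct.sum_tmul, map_sum, map_sum]
    simp [TensorProduct.assoc_tmul]
  rw [hL, hR]
  simp only [LinearMap.comp_apply, LinearEquiv.coe_coe]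
  rw [← Coalgebra.coassoc_apply]

lemma sum4 (G : A ⊗[k] (A ⊗[k] (A ⊗[k] A)) →ₗ[k] M) (a : A) :
    ∑ i ∈ (ℛ k a).index, ∑ j ∈ (ℛ k ((ℛ k a).right i)).index,
      ∑ l ∈ (ℛ k ((ℛ k ((ℛ k a).right i)).right j)).index,
      G ((ℛ k a).left i ⊗ₜ[k] ((ℛ k ((ℛ k a).right i)).left j ⊗ₜ[k]
        ((ℛ k ((ℛ k ((ℛ k a).right i)).right j)).left l ⊗ₜ[k]
         (ℛ k ((ℛ k ((ℛ k a).right i)).right j)).right l)))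
    = ∑ i ∈ (ℛ k a).index, ∑ j ∈ (ℛ k ((ℛ k a).left i)).index,
      ∑ l ∈ (ℛ k ((ℛ k a).right i)).index,
      G ((ℛ k ((ℛ k a).left i)).left j ⊗ₜ[k] ((ℛ k ((ℛ k a).left i)).right j ⊗ₜ[k]
        ((ℛ k ((ℛ k a).right i)).left l ⊗ₜ[k] (ℛ k ((ℛ k a).right i)).right l))) := by
  have key : ∀ (u m : A) (z : A),
      ∑ l ∈ (ℛ k z).index, G (u ⊗ₜ[k] (m ⊗ₜ[k] ((ℛ k z).left l ⊗ₜ[k] (ℛ k z).right l)))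
      = (G ∘ₗ LinearMap.lTensor A (LinearMap.lTensor A (Coalgebra.comul (R := k))))
          (u ⊗ₜ[k] (m ⊗ₜ[k] z)) := by
    intro u m z
    rw [LinearMap.comp_apply, LinearMap.lTensor_tmul, LinearMap.lTensor_tmul,
      ← (ℛ k z).eq, TensorProduct.tmul_sum, TensorProduct.tmul_sum, map_sum]
  calc ∑ i ∈ (ℛ k a).index, ∑ j ∈ (ℛ k ((ℛ k a).right i)).index,
      ∑ l ∈ (ℛ k ((ℛ k ((ℛ k a).right i)).right j)).index,
      G ((ℛ k a).left i ⊗ₜ[k] ((ℛ k ((ℛ k a).right i)).left j ⊗ₜ[k]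
        ((ℛ k ((ℛ k ((ℛ k a).right i)).right j)).left l ⊗ₜ[k]
         (ℛ k ((ℛ k ((ℛ k a).right i)).right j)).right l)))
      = ∑ i ∈ (ℛ k a).index, ∑ j ∈ (ℛ k ((ℛ k a).right i)).index,
        (G ∘ₗ LinearMap.lTensor A (LinearMap.lTensor A (Coalgebra.comul (R := k))))
          ((ℛ k a).left i ⊗ₜ[k]
            ((ℛ k ((ℛ k a).right i)).left j ⊗ₜ[k] (ℛ k ((ℛ k a).right i)).right j)) := by
        refine Finset.sum_congr rfl fun i _ => Finset.sum_congr rfl fun j _ => ?_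
        exact key _ _ _
    _ = ∑ i ∈ (ℛ k a).index, ∑ j ∈ (ℛ k ((ℛ k a).left i)).index,
        (G ∘ₗ LinearMap.lTensor A (LinearMap.lTensor A (Coalgebra.comul (R := k))))
          ((ℛ k ((ℛ k a).left i)).left j ⊗ₜ[k]
            ((ℛ k ((ℛ k a).left i)).right j ⊗ₜ[k] (ℛ k a).right i)) :=
        sum3 _ a
    _ = _ := by
        refine Finset.sum_congr rfl fun i _ => Finset.sum_congr rfl fun j _ => ?_
        exact (key _ _ _).symm

end Generic

section Helpers

variable (act : C ⊗[k] H →ₗ[k] C)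

/-- `u ⊗ (w ⊗ x) ↦ uw ⊗ x`. -/
def mulL : H ⊗[k] (H ⊗[k] C) →ₗ[k] H ⊗[k] C :=
  TensorProduct.map (LinearMap.mul' k H) LinearMap.id
    ∘ₗ (TensorProduct.assoc k H H C).symm.toLinearMap

lemma mulL_tmul (u w : H) (x : C) :
    mulL k H C (u ⊗ₜ[k] (w ⊗ₜ[k] x)) = (u * w) ⊗ₜ[k] x := by simp [mulL]

lemma mulL_one (t : H ⊗[k] C) : mulL k H C ((1 : H) ⊗ₜ[k] t) = t := by
  induction t using TensorProduct.induction_on with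
  | zero => simp
  | tmul u x => simp [mulL_tmul]
  | add x y hx hy => rw [TensorProduct.tmul_add, map_add, hx, hy]

lemma mulL_mulL (u u' : H) (t : H ⊗[k] C) :
    mulL k H C (u ⊗ₜ[k] mulL k H C (u' ⊗ₜ[k] t)) = mulL k H C ((u * u') ⊗ₜ[k] t) := by
  induction t using TensorProduct.induction_on with
  | zero => simp
  | tmul w x => simp [mulL_tmul, mul_assoc]
  | add x y hx hy =>
      rw [TensorProduct.tmul_add, map_add, TensorProduct.tmul_add, map_add,
        TensorProduct.tmul_add, map_add, hx, hy]

/-- `a ⊗ (u ⊗ x) ↦ (a·u) ⊗ x`. -/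
def D2 : C ⊗[k] (H ⊗[k] C) →ₗ[k] C ⊗[k] C :=
  TensorProduct.map act LinearMap.id ∘ₗ (TensorProduct.assoc k C H C).symm.toLinearMap

lemma D2_tmul (a : C) (u : H) (x : C) :
    D2 k H C act (a ⊗ₜ[k] (u ⊗ₜ[k] x)) = act (a ⊗ₜ[k] u) ⊗ₜ[k] x := by simp [D2]

lemma D2_mulL (hact2 : ∀ (c : C) (g h : H), act (act (c ⊗ₜ g) ⊗ₜ h) = act (c ⊗ₜ (g * h)))
    (a : C) (u : H) (t : H ⊗[k] C) :
    D2 k H C act (a ⊗ₜ[k] mulL k H C (u ⊗ₜ[k] t)) = D2 k H C act (act (a ⊗ₜ[k] u) ⊗ₜ[k] t) := by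
  induction t using TensorProduct.induction_on with
  | zero => simp
  | tmul w x => rw [mulL_tmul, D2_tmul, D2_tmul, hact2]
  | add x y hx hy =>
      rw [TensorProduct.tmul_add, map_add, TensorProduct.tmul_add, map_add,
        TensorProduct.tmul_add, map_add, hx, hy]

/-- `(x ⊗ y) ⊗ (u ⊗ w) ↦ xu ⊗ y·w`. -/
def core : (H ⊗[k] C) ⊗[k] (H ⊗[k] H) →ₗ[k] H ⊗[k] C :=
  TensorProduct.map (LinearMap.mul' k H) act
    ∘ₗ (TensorProduct.tensorTensorTensorComm k H C H H).toLinearMap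

lemma core_tmul (x : H) (y : C) (u w : H) :
    core k H C act ((x ⊗ₜ[k] y) ⊗ₜ[k] (u ⊗ₜ[k] w)) = (x * u) ⊗ₜ[k] act (y ⊗ₜ[k] w) := by
  simp [core]

variable (v : C →ₗ[k] H)

lemma psiV_apply (a : C) :
    psiV k H C act v a
      = ∑ i ∈ (ℛ k a).index, act ((ℛ k a).left i ⊗ₜ[k] v ((ℛ k a).right i)) := by
  rw [psiV, LinearMap.comp_apply, LinearMap.comp_apply, ← (ℛ k a).eq, map_sum, map_sum]
  simp

lemma comul_act
    (hact3 : Coalgebra.comul ∘ₗ act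
      = TensorProduct.map act act
        ∘ₗ (TensorProduct.tensorTensorTensorComm k C C H H).toLinearMap
        ∘ₗ TensorProduct.map Coalgebra.comul Coalgebra.comul)
    (x : C) (u : H) :
    Coalgebra.comul (R := k) (act (x ⊗ₜ[k] u))
      = ∑ i ∈ (ℛ k x).index, ∑ j ∈ (ℛ k u).index,
          act ((ℛ k x).left i ⊗ₜ[k] (ℛ k u).left j)
            ⊗ₜ[k] act ((ℛ k x).right i ⊗ₜ[k] (ℛ k u).right j) := by
  have h := LinearMap.congr_fun hact3 (x ⊗ₜ[k] u)
  simp only [LinearMap.comp_apply, TensorProduct.map_tmul] at h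
  rw [h, ← (ℛ k x).eq, ← (ℛ k u).eq, TensorProduct.sum_tmul]
  rw [map_sum, map_sum]
  refine Finset.sum_congr rfl fun i _ => ?_
  rw [TensorProduct.tmul_sum, map_sum, map_sum]
  refine Finset.sum_congr rfl fun j _ => ?_
  simp

lemma v_act
    (hv2 : v ∘ₗ act
      = sandwichA k H
          ∘ₗ TensorProduct.map v
              (TensorProduct.map (HopfAlgebra.antipode k : H →ₗ[k] H) LinearMap.id
                ∘ₗ Coalgebra.comul))
    (x : C) (u : H) :
    v (act (x ⊗ₜ[k] u))
      = ∑ j ∈ (ℛ k u).index,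
          HopfAlgebra.antipode (R := k) ((ℛ k u).left j) * v x * (ℛ k u).right j := by
  have h := LinearMap.congr_fun hv2 (x ⊗ₜ[k] u)
  simp only [LinearMap.comp_apply, TensorProduct.map_tmul] at h
  rw [h, ← (ℛ k u).eq, map_sum, TensorProduct.tmul_sum, map_sum]
  refine Finset.sum_congr rfl fun j _ => ?_
  simp [sandwichA, mul_assoc]

lemma psi_act
    (hact2 : ∀ (c : C) (g h : H), act (act (c ⊗ₜ g) ⊗ₜ h) = act (c ⊗ₜ (g * h)))
    (hact3 : Coalgebra.comul ∘ₗ act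
      = TensorProduct.map act act
        ∘ₗ (TensorProduct.tensorTensorTensorComm k C C H H).toLinearMap
        ∘ₗ TensorProduct.map Coalgebra.comul Coalgebra.comul)
    (hv2 : v ∘ₗ act
      = sandwichA k H
          ∘ₗ TensorProduct.map v
              (TensorProduct.map (HopfAlgebra.antipode k : H →ₗ[k] H) LinearMap.id
                ∘ₗ Coalgebra.comul))
    (x : C) (u : H) :
    psiV k H C act v (act (x ⊗ₜ[k] u)) = act (psiV k H C act v x ⊗ₜ[k] u) := by
  have hrhs : act (psiV k H C act v x ⊗ₜ[k] u)
      = ∑ i ∈ (ℛ k x).index, act ((ℛ k x).left i ⊗ₜ[k] (v ((ℛ k x).right i) * u)) := by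
    rw [psiV_apply, TensorProduct.sum_tmul, map_sum]
    exact Finset.sum_congr rfl fun i _ => hact2 _ _ _
  rw [hrhs]
  calc psiV k H C act v (act (x ⊗ₜ[k] u))
      = ∑ i ∈ (ℛ k x).index, ∑ j ∈ (ℛ k u).index,
          act (act ((ℛ k x).left i ⊗ₜ[k] (ℛ k u).left j)
            ⊗ₜ[k] v (act ((ℛ k x).right i ⊗ₜ[k] (ℛ k u).right j))) := by
        rw [psiV, LinearMap.comp_apply, LinearMap.comp_apply, comul_act k H C act hact3]
        rw [map_sum (TensorProduct.map LinearMap.id v), map_sum act]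
        refine Finset.sum_congr rfl fun i _ => ?_
        rw [map_sum (TensorProduct.map LinearMap.id v), map_sum act]
        refine Finset.sum_congr rfl fun j _ => ?_
        simp
    _ = ∑ i ∈ (ℛ k x).index, ∑ j ∈ (ℛ k u).index,
          ∑ l ∈ (ℛ k ((ℛ k u).right j)).index,
          act ((ℛ k x).left i ⊗ₜ[k] ((ℛ k u).left j *
            (HopfAlgebra.antipode (R := k) ((ℛ k ((ℛ k u).right j)).left l) * v ((ℛ k x).right i)
              * (ℛ k ((ℛ k u).right j)).right l))) := by
        refine Finset.sum_congr rfl fun i _ => Finset.sum_congr rfl fun j _ => ?_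
        rw [v_act k H C act v hv2, TensorProduct.tmul_sum, map_sum]
        exact Finset.sum_congr rfl fun l _ => hact2 _ _ _
    _ = ∑ i ∈ (ℛ k x).index, ∑ j ∈ (ℛ k u).index,
          ∑ l ∈ (ℛ k ((ℛ k u).left j)).index,
          act ((ℛ k x).left i ⊗ₜ[k] ((ℛ k ((ℛ k u).left j)).left l *
            (HopfAlgebra.antipode (R := k) ((ℛ k ((ℛ k u).left j)).right l) * v ((ℛ k x).right i)
              * (ℛ k u).right j))) := by
        refine Finset.sum_congr rfl fun i _ => ?_
        exact sum3 (k := k) (A := H) (M := C)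
          (act ∘ₗ TensorProduct.mk k C H ((ℛ k x).left i) ∘ₗ LinearMap.mul' k H
            ∘ₗ LinearMap.lTensor H (LinearMap.mul' k H
              ∘ₗ TensorProduct.map
                  (LinearMap.mulRight k (v ((ℛ k x).right i))
                    ∘ₗ (HopfAlgebra.antipode k : H →ₗ[k] H))
                  LinearMap.id)) u
    _ = ∑ i ∈ (ℛ k x).index, ∑ j ∈ (ℛ k u).index,
          Coalgebra.counit (R := k) ((ℛ k u).left j) •
            act ((ℛ k x).left i ⊗ₜ[k] (v ((ℛ k x).right i) * (ℛ k u).right j)) := by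
        refine Finset.sum_congr rfl fun i _ => Finset.sum_congr rfl fun j _ => ?_
        calc ∑ l ∈ (ℛ k ((ℛ k u).left j)).index,
              act ((ℛ k x).left i ⊗ₜ[k] ((ℛ k ((ℛ k u).left j)).left l *
                (HopfAlgebra.antipode (R := k) ((ℛ k ((ℛ k u).left j)).right l)
                  * v ((ℛ k x).right i) * (ℛ k u).right j)))
            = act ((ℛ k x).left i ⊗ₜ[k]
                ((∑ l ∈ (ℛ k ((ℛ k u).left j)).index,
                  (ℛ k ((ℛ k u).left j)).left l *
                    HopfAlgebra.antipode (R := k) ((ℛ k ((ℛ k u).left j)).right l)) *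
                  (v ((ℛ k x).right i) * (ℛ k u).right j))) := by
              rw [Finset.sum_mul, TensorProduct.tmul_sum, map_sum]
              exact Finset.sum_congr rfl fun l _ => by rw [mul_assoc, mul_assoc]
          _ = Coalgebra.counit (R := k) ((ℛ k u).left j) •
              act ((ℛ k x).left i ⊗ₜ[k] (v ((ℛ k x).right i) * (ℛ k u).right j)) := by
              rw [HopfAlgebra.sum_mul_antipode_eq_algebraMap_counit (ℛ k ((ℛ k u).left j)), ← Algebra.smul_def,
                TensorProduct.tmul_smul, map_smul]
    _ = ∑ i ∈ (ℛ k x).index, act ((ℛ k x).left i ⊗ₜ[k] (v ((ℛ k x).right i) * u)) := by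
        refine Finset.sum_congr rfl fun i _ => ?_
        exact sum_counit_smul_apply (k := k) (A := H) (M := C)
          (act ∘ₗ TensorProduct.mk k C H ((ℛ k x).left i)
            ∘ₗ LinearMap.mulLeft k (v ((ℛ k x).right i))) u

variable (lam : C →ₗ[k] H ⊗[k] C)

lemma eq6L_apply (c : C) (h : H) :
    eq6L k H C act lam (c ⊗ₜ[k] h)
      = ∑ j ∈ (ℛ k h).index,
          core k H C act (lam c ⊗ₜ[k] ((ℛ k h).left j ⊗ₜ[k] (ℛ k h).right j)) := by
  have : eq6L k H C act lam (c ⊗ₜ[k] h)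
      = core k H C act (TensorProduct.map lam Coalgebra.comul (c ⊗ₜ[k] h)) := rfl
  rw [this, TensorProduct.map_tmul, ← (ℛ k h).eq, TensorProduct.tmul_sum, map_sum]

lemma eq6R_apply (c : C) (h : H) :
    eq6R k H C act lam (c ⊗ₜ[k] h)
      = ∑ j ∈ (ℛ k h).index,
          mulL k H C ((ℛ k h).left j ⊗ₜ[k] lam (act (c ⊗ₜ[k] (ℛ k h).right j))) := by
  have : eq6R k H C act lam (c ⊗ₜ[k] h)
      = (mulL k H C ∘ₗ TensorProduct.map LinearMap.id (lam ∘ₗ act)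
          ∘ₗ (TensorProduct.leftComm k C H H).toLinearMap)
        (TensorProduct.map LinearMap.id Coalgebra.comul (c ⊗ₜ[k] h)) := rfl
  rw [this, TensorProduct.map_tmul, ← (ℛ k h).eq, TensorProduct.tmul_sum, map_sum]
  refine Finset.sum_congr rfl fun j _ => ?_
  simp [TensorProduct.leftComm_tmul]

lemma lam_act
    (hlam6 : eq6L k H C act lam = eq6R k H C act lam)
    (c : C) (h : H) :
    lam (act (c ⊗ₜ[k] h))
      = ∑ i ∈ (ℛ k h).index,
          mulL k H C (HopfAlgebra.antipode (R := k) ((ℛ k h).left i)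
            ⊗ₜ[k] eq6L k H C act lam (c ⊗ₜ[k] (ℛ k h).right i)) := by
  symm
  calc ∑ i ∈ (ℛ k h).index,
        mulL k H C (HopfAlgebra.antipode (R := k) ((ℛ k h).left i)
          ⊗ₜ[k] eq6L k H C act lam (c ⊗ₜ[k] (ℛ k h).right i))
      = ∑ i ∈ (ℛ k h).index, ∑ j ∈ (ℛ k ((ℛ k h).right i)).index,
          mulL k H C ((HopfAlgebra.antipode (R := k) ((ℛ k h).left i)
              * (ℛ k ((ℛ k h).right i)).left j)
            ⊗ₜ[k] lam (act (c ⊗ₜ[k] (ℛ k ((ℛ k h).right i)).right j))) := by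
        refine Finset.sum_congr rfl fun i _ => ?_
        rw [LinearMap.congr_fun hlam6 (c ⊗ₜ[k] (ℛ k h).right i), eq6R_apply,
          TensorProduct.tmul_sum, map_sum]
        exact Finset.sum_congr rfl fun j _ => mulL_mulL k H C _ _ _
    _ = ∑ i ∈ (ℛ k h).index, ∑ j ∈ (ℛ k ((ℛ k h).left i)).index,
          mulL k H C ((HopfAlgebra.antipode (R := k) ((ℛ k ((ℛ k h).left i)).left j)
              * (ℛ k ((ℛ k h).left i)).right j)
            ⊗ₜ[k] lam (act (c ⊗ₜ[k] (ℛ k h).right i))) :=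
        sum3 (k := k) (A := H) (M := H ⊗[k] C)
          (mulL k H C
            ∘ₗ TensorProduct.map
                (LinearMap.mul' k H
                  ∘ₗ TensorProduct.map (HopfAlgebra.antipode k : H →ₗ[k] H) LinearMap.id)
                (lam ∘ₗ act ∘ₗ TensorProduct.mk k C H c)
            ∘ₗ (TensorProduct.assoc k H H H).symm.toLinearMap) h
    _ = ∑ i ∈ (ℛ k h).index,
          Coalgebra.counit (R := k) ((ℛ k h).left i) • lam (act (c ⊗ₜ[k] (ℛ k h).right i)) := by
        refine Finset.sum_congr rfl fun i _ => ?_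
        rw [← map_sum (mulL k H C), ← TensorProduct.sum_tmul,
          HopfAlgebra.sum_antipode_mul_eq_algebraMap_counit (ℛ k ((ℛ k h).left i)),
          Algebra.algebraMap_eq_smul_one, ← TensorProduct.smul_tmul', map_smul, mulL_one]
    _ = lam (act (c ⊗ₜ[k] h)) :=
        sum_counit_smul_apply (k := k) (A := H)
          (lam ∘ₗ act ∘ₗ TensorProduct.mk k C H c) h

lemma DeltaT_comp (mu : C →ₗ[k] H ⊗[k] C) (z : C) :
    DeltaT k H C act mu z
      = (D2 k H C act ∘ₗ TensorProduct.map LinearMap.id mu) (Coalgebra.comul z) := rfl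

lemma DeltaT_apply (mu : C →ₗ[k] H ⊗[k] C) (z : C) :
    DeltaT k H C act mu z
      = ∑ i ∈ (ℛ k z).index,
          D2 k H C act ((ℛ k z).left i ⊗ₜ[k] mu ((ℛ k z).right i)) := by
  rw [DeltaT_comp, ← (ℛ k z).eq, map_sum]
  refine Finset.sum_congr rfl fun i _ => ?_
  simp

lemma comul_psi (v : C →ₗ[k] H)
    (hact3 : Coalgebra.comul ∘ₗ act
      = TensorProduct.map act act
        ∘ₗ (TensorProduct.tensorTensorTensorComm k C C H H).toLinearMap
        ∘ₗ TensorProduct.map Coalgebra.comul Coalgebra.comul)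
    (c : C) :
    Coalgebra.comul (R := k) (psiV k H C act v c)
      = ∑ i ∈ (ℛ k c).index, ∑ j ∈ (ℛ k ((ℛ k c).left i)).index,
          ∑ n ∈ (ℛ k (v ((ℛ k c).right i))).index,
          act ((ℛ k ((ℛ k c).left i)).left j ⊗ₜ[k] (ℛ k (v ((ℛ k c).right i))).left n)
            ⊗ₜ[k]
          act ((ℛ k ((ℛ k c).left i)).right j ⊗ₜ[k] (ℛ k (v ((ℛ k c).right i))).right n) := by
  rw [psiV_apply, map_sum]
  exact Finset.sum_congr rfl fun i _ => comul_act k H C act hact3 _ _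

/-- Head of `eq22L`. -/
def E22L (lam : C →ₗ[k] H ⊗[k] C) (v : C →ₗ[k] H) : C ⊗[k] C →ₗ[k] H ⊗[k] C :=
  TensorProduct.map (LinearMap.mul' k H) act
    ∘ₗ (TensorProduct.tensorTensorTensorComm k H C H H).toLinearMap
    ∘ₗ TensorProduct.map lam (Coalgebra.comul ∘ₗ v)

lemma E22L_tmul (v : C →ₗ[k] H) (x z : C) :
    E22L k H C act lam v (x ⊗ₜ[k] z)
      = core k H C act (lam x ⊗ₜ[k] Coalgebra.comul (v z)) := rfl

lemma sum_E22L (v : C →ₗ[k] H) (z : C) :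
    ∑ j ∈ (ℛ k z).index,
      E22L k H C act lam v ((ℛ k z).left j ⊗ₜ[k] (ℛ k z).right j)
      = eq22L k H C act lam v z := by
  rw [sum_repr_apply (E22L k H C act lam v) z]; rfl

lemma eq22R_apply (v : C →ₗ[k] H) (tau : C →ₗ[k] H ⊗[k] C) (z : C) :
    eq22R k H C act tau v z
      = ∑ j ∈ (ℛ k z).index,
          mulL k H C (v ((ℛ k z).left j) ⊗ₜ[k]
            TensorProduct.map LinearMap.id (psiV k H C act v) (tau ((ℛ k z).right j))) := by
  have : eq22R k H C act tau v z
      = (mulL k H C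
          ∘ₗ TensorProduct.map v (TensorProduct.map LinearMap.id (psiV k H C act v) ∘ₗ tau))
        (Coalgebra.comul z) := rfl
  rw [this, ← (ℛ k z).eq, map_sum]
  refine Finset.sum_congr rfl fun j _ => ?_
  simp

lemma psi_D2 (v : C →ₗ[k] H)
    (hact2 : ∀ (c : C) (g h : H), act (act (c ⊗ₜ g) ⊗ₜ h) = act (c ⊗ₜ (g * h)))
    (hact3 : Coalgebra.comul ∘ₗ act
      = TensorProduct.map act act
        ∘ₗ (TensorProduct.tensorTensorTensorComm k C C H H).toLinearMap
        ∘ₗ TensorProduct.map Coalgebra.comul Coalgebra.comul)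
    (hv2 : v ∘ₗ act
      = sandwichA k H
          ∘ₗ TensorProduct.map v
              (TensorProduct.map (HopfAlgebra.antipode k : H →ₗ[k] H) LinearMap.id
                ∘ₗ Coalgebra.comul))
    (a : C) (t : H ⊗[k] C) :
    TensorProduct.map (psiV k H C act v) (psiV k H C act v) (D2 k H C act (a ⊗ₜ[k] t))
      = D2 k H C act (psiV k H C act v a
          ⊗ₜ[k] TensorProduct.map LinearMap.id (psiV k H C act v) t) := by
  induction t using TensorProduct.induction_on with
  | zero => simp
  | tmul u x =>
      rw [D2_tmul, TensorProduct.map_tmul, TensorProduct.map_tmul, LinearMap.id_coe, id_eq,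
        D2_tmul, psi_act k H C act v hact2 hact3 hv2]
  | add x y hx hy =>
      rw [TensorProduct.tmul_add, map_add, map_add, hx, hy, map_add,
        TensorProduct.tmul_add, map_add]

end Helpers

end TwistPaper

/-- Proposition 2.3, first part: if `v : C → H` satisfies
(20)–(22), then `ψ(c) = c₁·v(c₂)` is a right `H`-linear coalgebra map
`C^τ → C^λ`. -/
theorem TwistPaper.psi_coalgebra_map
    (act : C ⊗[k] H →ₗ[k] C) (hact : IsModuleCoalg k H C act)
    (τ lam : C →ₗ[k] H ⊗[k] C)
    (hτ : IsTwisting k H C act τ) (hlam : IsTwisting k H C act lam)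
    (v : C →ₗ[k] H) (hv : VCond k H C act τ lam v) :
    -- ψ is right H-linear
    psiV k H C act v ∘ₗ act
      = act ∘ₗ TensorProduct.map (psiV k H C act v) LinearMap.id ∧
    -- ψ is counital
    (Coalgebra.counit : C →ₗ[k] k) ∘ₗ psiV k H C act v = Coalgebra.counit ∧
    -- ψ is comultiplicative from Δ_τ to Δ_λ
    DeltaT k H C act lam ∘ₗ psiV k H C act v
      = TensorProduct.map (psiV k H C act v) (psiV k H C act v) ∘ₗ DeltaT k H C act τ := by
  obtain ⟨hact1, hact2, hact3, hact4⟩ := hact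
  refine ⟨?_, ?_, ?_⟩
  · refine TensorProduct.ext' fun x u => ?_
    simp only [LinearMap.comp_apply, TensorProduct.map_tmul, LinearMap.id_coe, id_eq]
    exact psi_act k H C act v hact2 hact3 hv.2.1 x u
  · refine LinearMap.ext fun c => ?_
    rw [LinearMap.comp_apply, psiV_apply, map_sum]
    have hterm : ∀ i ∈ (ℛ k c).index,
        Coalgebra.counit (R := k) (act ((ℛ k c).left i ⊗ₜ[k] v ((ℛ k c).right i)))
          = Coalgebra.counit (R := k) ((ℛ k c).left i) •
              (Coalgebra.counit (R := k) ((ℛ k c).right i) : k) := by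
      intro i _
      have h := LinearMap.congr_fun hact4 ((ℛ k c).left i ⊗ₜ[k] v ((ℛ k c).right i))
      simp only [LinearMap.comp_apply, TensorProduct.map_tmul, LinearEquiv.coe_coe,
        TensorProduct.lid_tmul] at h
      rw [h]
      have h2 := LinearMap.congr_fun hv.1 ((ℛ k c).right i)
      rw [LinearMap.comp_apply] at h2
      rw [h2]
    rw [Finset.sum_congr rfl hterm]
    exact sum_counit_smul_apply (k := k) (A := C) (M := k) Coalgebra.counit c
  · refine LinearMap.ext fun c => ?_
    simp only [LinearMap.comp_apply]
    have hRHS : TensorProduct.map (psiV k H C act v) (psiV k H C act v) (DeltaT k H C act τ c)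
        = ∑ i ∈ (ℛ k c).index,
            D2 k H C act (psiV k H C act v ((ℛ k c).left i)
              ⊗ₜ[k] TensorProduct.map LinearMap.id (psiV k H C act v) (τ ((ℛ k c).right i))) := by
      rw [DeltaT_apply, map_sum]
      exact Finset.sum_congr rfl fun i _ => psi_D2 k H C act v hact2 hact3 hv.2.1 _ _
    rw [hRHS]
    calc DeltaT k H C act lam (psiV k H C act v c)
        = ∑ i ∈ (ℛ k c).index, ∑ j ∈ (ℛ k ((ℛ k c).left i)).index,
            ∑ n ∈ (ℛ k (v ((ℛ k c).right i))).index,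
            D2 k H C act
              (act ((ℛ k ((ℛ k c).left i)).left j ⊗ₜ[k] (ℛ k (v ((ℛ k c).right i))).left n)
                ⊗ₜ[k] lam (act ((ℛ k ((ℛ k c).left i)).right j
                  ⊗ₜ[k] (ℛ k (v ((ℛ k c).right i))).right n))) := by
          rw [DeltaT_comp, comul_psi k H C act v hact3 c]
          simp only [map_sum, LinearMap.comp_apply, TensorProduct.map_tmul,
            LinearMap.id_coe, id_eq]
      _ = ∑ i ∈ (ℛ k c).index, ∑ j ∈ (ℛ k ((ℛ k c).left i)).index,
            ∑ n ∈ (ℛ k (v ((ℛ k c).right i))).index,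
            ∑ m ∈ (ℛ k ((ℛ k (v ((ℛ k c).right i))).right n)).index,
            ∑ p ∈ (ℛ k ((ℛ k ((ℛ k (v ((ℛ k c).right i))).right n)).right m)).index,
            D2 k H C act
              (act ((ℛ k ((ℛ k c).left i)).left j ⊗ₜ[k] (ℛ k (v ((ℛ k c).right i))).left n)
                ⊗ₜ[k] mulL k H C
                  (HopfAlgebra.antipode (R := k)
                      ((ℛ k ((ℛ k (v ((ℛ k c).right i))).right n)).left m)
                    ⊗ₜ[k] core k H C act
                      (lam ((ℛ k ((ℛ k c).left i)).right j)
                        ⊗ₜ[k] ((ℛ k ((ℛ k ((ℛ k (v ((ℛ k c).right i))).right n)).right m)).left p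
                          ⊗ₜ[k]
                          (ℛ k ((ℛ k ((ℛ k (v ((ℛ k c).right i))).right n)).right m)).right p)))) := by
          refine Finset.sum_congr rfl fun i _ => Finset.sum_congr rfl fun j _ =>
            Finset.sum_congr rfl fun n _ => ?_
          rw [lam_act k H C act lam hlam.2.2.1, TensorProduct.tmul_sum, map_sum]
          refine Finset.sum_congr rfl fun m _ => ?_
          rw [eq6L_apply, TensorProduct.tmul_sum, map_sum, TensorProduct.tmul_sum, map_sum]
      _ = ∑ i ∈ (ℛ k c).index, ∑ j ∈ (ℛ k ((ℛ k c).left i)).index,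
            ∑ n ∈ (ℛ k (v ((ℛ k c).right i))).index,
            ∑ m ∈ (ℛ k ((ℛ k (v ((ℛ k c).right i))).right n)).index,
            ∑ p ∈ (ℛ k ((ℛ k ((ℛ k (v ((ℛ k c).right i))).right n)).right m)).index,
            D2 k H C act
              ((ℛ k ((ℛ k c).left i)).left j
                ⊗ₜ[k] mulL k H C
                  (((ℛ k (v ((ℛ k c).right i))).left n *
                      HopfAlgebra.antipode (R := k)
                        ((ℛ k ((ℛ k (v ((ℛ k c).right i))).right n)).left m))
                    ⊗ₜ[k] core k H C act
                      (lam ((ℛ k ((ℛ k c).left i)).right j)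
                        ⊗ₜ[k] ((ℛ k ((ℛ k ((ℛ k (v ((ℛ k c).right i))).right n)).right m)).left p
                          ⊗ₜ[k]
                          (ℛ k ((ℛ k ((ℛ k (v ((ℛ k c).right i))).right n)).right m)).right p)))) := by
          refine Finset.sum_congr rfl fun i _ => Finset.sum_congr rfl fun j _ =>
            Finset.sum_congr rfl fun n _ => Finset.sum_congr rfl fun m _ =>
            Finset.sum_congr rfl fun p _ => ?_
          rw [D2_mulL k H C act hact2, hact2, ← D2_mulL k H C act hact2]
      _ = ∑ i ∈ (ℛ k c).index, ∑ j ∈ (ℛ k ((ℛ k c).left i)).index,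
            ∑ n ∈ (ℛ k (v ((ℛ k c).right i))).index,
            ∑ m ∈ (ℛ k ((ℛ k (v ((ℛ k c).right i))).left n)).index,
            ∑ p ∈ (ℛ k ((ℛ k (v ((ℛ k c).right i))).right n)).index,
            D2 k H C act
              ((ℛ k ((ℛ k c).left i)).left j
                ⊗ₜ[k] mulL k H C
                  (((ℛ k ((ℛ k (v ((ℛ k c).right i))).left n)).left m *
                      HopfAlgebra.antipode (R := k)
                        ((ℛ k ((ℛ k (v ((ℛ k c).right i))).left n)).right m))
                    ⊗ₜ[k] core k H C act
                      (lam ((ℛ k ((ℛ k c).left i)).right j)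
                        ⊗ₜ[k] ((ℛ k ((ℛ k (v ((ℛ k c).right i))).right n)).left p
                          ⊗ₜ[k] (ℛ k ((ℛ k (v ((ℛ k c).right i))).right n)).right p)))) := by
          refine Finset.sum_congr rfl fun i _ => Finset.sum_congr rfl fun j _ => ?_
          exact sum4 (k := k) (A := H) (M := C ⊗[k] C)
            (D2 k H C act
              ∘ₗ TensorProduct.mk k C (H ⊗[k] C) ((ℛ k ((ℛ k c).left i)).left j)
              ∘ₗ mulL k H C
              ∘ₗ TensorProduct.map
                  (LinearMap.mul' k H
                    ∘ₗ TensorProduct.map LinearMap.id (HopfAlgebra.antipode k : H →ₗ[k] H))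
                  (core k H C act
                    ∘ₗ TensorProduct.mk k (H ⊗[k] C) (H ⊗[k] H)
                        (lam ((ℛ k ((ℛ k c).left i)).right j)))
              ∘ₗ (TensorProduct.assoc k H H (H ⊗[k] H)).symm.toLinearMap)
            (v ((ℛ k c).right i))
      _ = ∑ i ∈ (ℛ k c).index, ∑ j ∈ (ℛ k ((ℛ k c).left i)).index,
            D2 k H C act
              ((ℛ k ((ℛ k c).left i)).left j
                ⊗ₜ[k] core k H C act
                  (lam ((ℛ k ((ℛ k c).left i)).right j)
                    ⊗ₜ[k] Coalgebra.comul (v ((ℛ k c).right i)))) := by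
          refine Finset.sum_congr rfl fun i _ => Finset.sum_congr rfl fun j _ => ?_
          calc ∑ n ∈ (ℛ k (v ((ℛ k c).right i))).index,
                ∑ m ∈ (ℛ k ((ℛ k (v ((ℛ k c).right i))).left n)).index,
                ∑ p ∈ (ℛ k ((ℛ k (v ((ℛ k c).right i))).right n)).index,
                D2 k H C act
                  ((ℛ k ((ℛ k c).left i)).left j
                    ⊗ₜ[k] mulL k H C
                      (((ℛ k ((ℛ k (v ((ℛ k c).right i))).left n)).left m *
                          HopfAlgebra.antipode (R := k)
                            ((ℛ k ((ℛ k (v ((ℛ k c).right i))).left n)).right m))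
                        ⊗ₜ[k] core k H C act
                          (lam ((ℛ k ((ℛ k c).left i)).right j)
                            ⊗ₜ[k] ((ℛ k ((ℛ k (v ((ℛ k c).right i))).right n)).left p
                              ⊗ₜ[k] (ℛ k ((ℛ k (v ((ℛ k c).right i))).right n)).right p))))
              = ∑ n ∈ (ℛ k (v ((ℛ k c).right i))).index,
                ∑ m ∈ (ℛ k ((ℛ k (v ((ℛ k c).right i))).left n)).index,
                D2 k H C act
                  ((ℛ k ((ℛ k c).left i)).left j
                    ⊗ₜ[k] mulL k H C
                      (((ℛ k ((ℛ k (v ((ℛ k c).right i))).left n)).left m *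
                          HopfAlgebra.antipode (R := k)
                            ((ℛ k ((ℛ k (v ((ℛ k c).right i))).left n)).right m))
                        ⊗ₜ[k] core k H C act
                          (lam ((ℛ k ((ℛ k c).left i)).right j)
                            ⊗ₜ[k] Coalgebra.comul
                              ((ℛ k (v ((ℛ k c).right i))).right n)))) := by
                refine Finset.sum_congr rfl fun n _ => Finset.sum_congr rfl fun m _ => ?_
                rw [← (ℛ k ((ℛ k (v ((ℛ k c).right i))).right n)).eq,
                  TensorProduct.tmul_sum, map_sum, TensorProduct.tmul_sum, map_sum,
                  TensorProduct.tmul_sum, map_sum]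
            _ = ∑ n ∈ (ℛ k (v ((ℛ k c).right i))).index,
                Coalgebra.counit (R := k) ((ℛ k (v ((ℛ k c).right i))).left n) •
                  D2 k H C act
                    ((ℛ k ((ℛ k c).left i)).left j
                      ⊗ₜ[k] core k H C act
                        (lam ((ℛ k ((ℛ k c).left i)).right j)
                          ⊗ₜ[k] Coalgebra.comul ((ℛ k (v ((ℛ k c).right i))).right n))) := by
                refine Finset.sum_congr rfl fun n _ => ?_
                have hmap : ∑ m ∈ (ℛ k ((ℛ k (v ((ℛ k c).right i))).left n)).index,
                    (D2 k H C act
                      ∘ₗ TensorProduct.mk k C (H ⊗[k] C) ((ℛ k ((ℛ k c).left i)).left j)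
                      ∘ₗ mulL k H C
                      ∘ₗ (TensorProduct.mk k H (H ⊗[k] C)).flip
                          (core k H C act
                            (lam ((ℛ k ((ℛ k c).left i)).right j)
                              ⊗ₜ[k] Coalgebra.comul ((ℛ k (v ((ℛ k c).right i))).right n))))
                      ((ℛ k ((ℛ k (v ((ℛ k c).right i))).left n)).left m *
                        HopfAlgebra.antipode (R := k)
                          ((ℛ k ((ℛ k (v ((ℛ k c).right i))).left n)).right m))
                    = (D2 k H C act
                      ∘ₗ TensorProduct.mk k C (H ⊗[k] C) ((ℛ k ((ℛ k c).left i)).left j)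
                      ∘ₗ mulL k H C
                      ∘ₗ (TensorProduct.mk k H (H ⊗[k] C)).flip
                          (core k H C act
                            (lam ((ℛ k ((ℛ k c).left i)).right j)
                              ⊗ₜ[k] Coalgebra.comul ((ℛ k (v ((ℛ k c).right i))).right n))))
                      (algebraMap k H
                        (Coalgebra.counit (R := k) ((ℛ k (v ((ℛ k c).right i))).left n))) := by
                  rw [← map_sum,
                    HopfAlgebra.sum_mul_antipode_eq_algebraMap_counit (ℛ k ((ℛ k (v ((ℛ k c).right i))).left n))]
                calc ∑ m ∈ (ℛ k ((ℛ k (v ((ℛ k c).right i))).left n)).index,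
                      D2 k H C act
                        ((ℛ k ((ℛ k c).left i)).left j
                          ⊗ₜ[k] mulL k H C
                            (((ℛ k ((ℛ k (v ((ℛ k c).right i))).left n)).left m *
                                HopfAlgebra.antipode (R := k)
                                  ((ℛ k ((ℛ k (v ((ℛ k c).right i))).left n)).right m))
                              ⊗ₜ[k] core k H C act
                                (lam ((ℛ k ((ℛ k c).left i)).right j)
                                  ⊗ₜ[k] Coalgebra.comul
                                    ((ℛ k (v ((ℛ k c).right i))).right n))))
                    = (D2 k H C act
                        ∘ₗ TensorProduct.mk k C (H ⊗[k] C) ((ℛ k ((ℛ k c).left i)).left j)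
                        ∘ₗ mulL k H C
                        ∘ₗ (TensorProduct.mk k H (H ⊗[k] C)).flip
                            (core k H C act
                              (lam ((ℛ k ((ℛ k c).left i)).right j)
                                ⊗ₜ[k] Coalgebra.comul ((ℛ k (v ((ℛ k c).right i))).right n))))
                        (algebraMap k H
                          (Coalgebra.counit (R := k) ((ℛ k (v ((ℛ k c).right i))).left n))) :=
                      hmap
                  _ = Coalgebra.counit (R := k) ((ℛ k (v ((ℛ k c).right i))).left n) •
                      D2 k H C act
                        ((ℛ k ((ℛ k c).left i)).left j
                          ⊗ₜ[k] core k H C act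
                            (lam ((ℛ k ((ℛ k c).left i)).right j)
                              ⊗ₜ[k] Coalgebra.comul ((ℛ k (v ((ℛ k c).right i))).right n))) := by
                      rw [Algebra.algebraMap_eq_smul_one, map_smul]
                      congr 1
                      show D2 k H C act
                          ((ℛ k ((ℛ k c).left i)).left j
                            ⊗ₜ[k] mulL k H C ((1 : H) ⊗ₜ[k] _)) = _
                      rw [mulL_one]
            _ = D2 k H C act
                  ((ℛ k ((ℛ k c).left i)).left j
                    ⊗ₜ[k] core k H C act
                      (lam ((ℛ k ((ℛ k c).left i)).right j)
                        ⊗ₜ[k] Coalgebra.comul (v ((ℛ k c).right i))) ) :=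
                sum_counit_smul_apply (k := k) (A := H) (M := C ⊗[k] C)
                  (D2 k H C act
                    ∘ₗ TensorProduct.mk k C (H ⊗[k] C) ((ℛ k ((ℛ k c).left i)).left j)
                    ∘ₗ core k H C act
                    ∘ₗ TensorProduct.mk k (H ⊗[k] C) (H ⊗[k] H)
                        (lam ((ℛ k ((ℛ k c).left i)).right j))
                    ∘ₗ (Coalgebra.comul : H →ₗ[k] H ⊗[k] H))
                  (v ((ℛ k c).right i))
      _ = ∑ i ∈ (ℛ k c).index, ∑ j ∈ (ℛ k ((ℛ k c).right i)).index,
            D2 k H C act ((ℛ k c).left i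
              ⊗ₜ[k] E22L k H C act lam v
                  ((ℛ k ((ℛ k c).right i)).left j ⊗ₜ[k] (ℛ k ((ℛ k c).right i)).right j)) :=
          (sum3 (k := k) (A := C) (M := C ⊗[k] C)
            (D2 k H C act ∘ₗ LinearMap.lTensor C (E22L k H C act lam v)) c).symm
      _ = ∑ i ∈ (ℛ k c).index, ∑ j ∈ (ℛ k ((ℛ k c).right i)).index,
            D2 k H C act (act ((ℛ k c).left i ⊗ₜ[k] v ((ℛ k ((ℛ k c).right i)).left j))
              ⊗ₜ[k] TensorProduct.map LinearMap.id (psiV k H C act v)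
                  (τ ((ℛ k ((ℛ k c).right i)).right j))) := by
          refine Finset.sum_congr rfl fun i _ => ?_
          calc ∑ j ∈ (ℛ k ((ℛ k c).right i)).index,
                D2 k H C act ((ℛ k c).left i
                  ⊗ₜ[k] E22L k H C act lam v
                      ((ℛ k ((ℛ k c).right i)).left j ⊗ₜ[k] (ℛ k ((ℛ k c).right i)).right j))
              = D2 k H C act ((ℛ k c).left i ⊗ₜ[k] eq22L k H C act lam v ((ℛ k c).right i)) := by
                rw [← sum_E22L, TensorProduct.tmul_sum, map_sum]
            _ = D2 k H C act ((ℛ k c).left i ⊗ₜ[k] eq22R k H C act τ v ((ℛ k c).right i)) := by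
                rw [hv.2.2]
            _ = ∑ j ∈ (ℛ k ((ℛ k c).right i)).index,
                D2 k H C act (act ((ℛ k c).left i ⊗ₜ[k] v ((ℛ k ((ℛ k c).right i)).left j))
                  ⊗ₜ[k] TensorProduct.map LinearMap.id (psiV k H C act v)
                      (τ ((ℛ k ((ℛ k c).right i)).right j))) := by
                rw [eq22R_apply, TensorProduct.tmul_sum, map_sum]
                exact Finset.sum_congr rfl fun j _ => D2_mulL k H C act hact2 _ _ _
      _ = ∑ i ∈ (ℛ k c).index, ∑ j ∈ (ℛ k ((ℛ k c).left i)).index,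
            D2 k H C act (act ((ℛ k ((ℛ k c).left i)).left j
                ⊗ₜ[k] v ((ℛ k ((ℛ k c).left i)).right j))
              ⊗ₜ[k] TensorProduct.map LinearMap.id (psiV k H C act v) (τ ((ℛ k c).right i))) :=
          sum3 (k := k) (A := C) (M := C ⊗[k] C)
            (D2 k H C act
              ∘ₗ TensorProduct.map (act ∘ₗ LinearMap.lTensor C v)
                  (TensorProduct.map LinearMap.id (psiV k H C act v) ∘ₗ τ)
              ∘ₗ (TensorProduct.assoc k C C C).symm.toLinearMap) c
      _ = ∑ i ∈ (ℛ k c).index,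
            D2 k H C act (psiV k H C act v ((ℛ k c).left i)
              ⊗ₜ[k] TensorProduct.map LinearMap.id (psiV k H C act v) (τ ((ℛ k c).right i))) := by
          refine Finset.sum_congr rfl fun i _ => ?_
          rw [psiV_apply, TensorProduct.sum_tmul, map_sum]
end
end

section
/- If v : C → H is convolution invertible and satisfies ε_H ∘ v = ε_C, v(c·h) = S(h₁)v(c)h₂, and c_{1,(-1)}v(c₂)₁ ⊗ c_{1,(0)}·v(c₂)₂ = v(c₁)c_{2,-1} ⊗ c_{2,0,1}·v(c_{2,0,2}) (where τ(c)=c_{-1}⊗c_0, λ(c)=c_{(-1)}⊗c_{(0)} are twistings), then the map ψ : C^τ → C^λ, ψ(c) = c₁·v(c₂), is bijective with inverse φ(c) = c₁·w(c₂), where w is the convolution inverse of v. -/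
open TensorProduct LinearMap Coalgebra

noncomputable section

variable (k : Type) [Field k]
variable (H : Type) [Ring H] [HopfAlgebra k H]
variable (C : Type) [AddCommGroup C] [Module k C] [Coalgebra k C]

-- ======================================================================
-- Auxiliary development
-- ======================================================================
set_option linter.unusedSectionVars false
set_option maxHeartbeats 1000000

variable {k} {H} {C}

namespace TwistAux

variable {k : Type} [Field k]
variable {H : Type} [Ring H] [HopfAlgebra k H]
variable {C : Type} [AddCommGroup C] [Module k C] [Coalgebra k C]
variable {D : Type} [AddCommGroup D] [Module k D] [Coalgebra k D]

def cv (f g : D →ₗ[k] H) : D →ₗ[k] H :=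
  LinearMap.mul' k H ∘ₗ TensorProduct.map f g ∘ₗ Coalgebra.comul

def cu : D →ₗ[k] H := Algebra.linearMap k H ∘ₗ Coalgebra.counit

variable (act : C ⊗[k] H →ₗ[k] C)

def ca (F : D →ₗ[k] C) (f : D →ₗ[k] H) : D →ₗ[k] C :=
  act ∘ₗ TensorProduct.map F f ∘ₗ Coalgebra.comul

lemma cv_apply (f g : D →ₗ[k] H) (d : D) {ι : Type*} (r : Coalgebra.Repr k d ι) :
    cv f g d = ∑ i ∈ r.index, f (r.left i) * g (r.right i) := by
  simp [cv, ← r.eq, map_sum]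

lemma ca_apply (F : D →ₗ[k] C) (f : D →ₗ[k] H) (d : D) {ι : Type*} (r : Coalgebra.Repr k d ι) :
    ca act F f d = ∑ i ∈ r.index, act (F (r.left i) ⊗ₜ f (r.right i)) := by
  simp [ca, ← r.eq, map_sum]

lemma cv_assoc (f g h : D →ₗ[k] H) : cv (cv f g) h = cv f (cv g h) := by
  ext d
  set r := Coalgebra.Repr.arbitrary k d with hr
  have key := Coalgebra.sum_map_tmul_tmul_eq (f := f) (g := g) (h := h) (a := d)
      (repr := r) (a₁ := fun i => Coalgebra.Repr.arbitrary k (r.left i))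
      (a₂ := fun i => Coalgebra.Repr.arbitrary k (r.right i))
  apply_fun (LinearMap.mul' k H ∘ₗ LinearMap.lTensor H (LinearMap.mul' k H)) at key
  simp only [map_sum, LinearMap.comp_apply, LinearMap.lTensor_tmul, LinearMap.mul'_apply] at key
  calc cv (cv f g) h d
      = ∑ i ∈ r.index, cv f g (r.left i) * h (r.right i) := cv_apply _ _ _ r
    _ = ∑ i ∈ r.index, ∑ j ∈ (Coalgebra.Repr.arbitrary k (r.left i)).index,
          f ((Coalgebra.Repr.arbitrary k (r.left i)).left j) *
            ((g ((Coalgebra.Repr.arbitrary k (r.left i)).right j)) * h (r.right i)) := by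
        refine Finset.sum_congr rfl fun i _ => ?_
        rw [cv_apply f g _ (Coalgebra.Repr.arbitrary k (r.left i)), Finset.sum_mul]
        simp [mul_assoc]
    _ = ∑ i ∈ r.index, ∑ j ∈ (Coalgebra.Repr.arbitrary k (r.right i)).index,
          f (r.left i) * (g ((Coalgebra.Repr.arbitrary k (r.right i)).left j) *
            h ((Coalgebra.Repr.arbitrary k (r.right i)).right j)) := key.symm
    _ = cv f (cv g h) d := by
        rw [cv_apply f (cv g h) d r]
        refine Finset.sum_congr rfl fun i _ => ?_
        rw [cv_apply g h _ (Coalgebra.Repr.arbitrary k (r.right i)), Finset.mul_sum]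

end TwistAux

set_option linter.unusedSectionVars false

namespace TwistAux
variable {k : Type} [Field k]
variable {H : Type} [Ring H] [HopfAlgebra k H]
variable {C : Type} [AddCommGroup C] [Module k C] [Coalgebra k C]
variable {D : Type} [AddCommGroup D] [Module k D] [Coalgebra k D]
variable (act : C ⊗[k] H →ₗ[k] C)

lemma cv_cu (f : D →ₗ[k] H) : cv f cu = f := by
  ext d
  have r := Coalgebra.Repr.arbitrary k d
  have key := congrArg (TensorProduct.rid k H) (Coalgebra.sum_map_tmul_counit_eq f d (repr := r))
  simp only [map_sum, TensorProduct.rid_tmul, one_smul] at key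
  rw [cv_apply f cu d r]
  rw [← key]
  refine Finset.sum_congr rfl fun i _ => ?_
  simp [cu, Algebra.smul_def, ← Algebra.commutes]

lemma cu_cv (f : D →ₗ[k] H) : cv cu f = f := by
  ext d
  have r := Coalgebra.Repr.arbitrary k d
  have key := congrArg (TensorProduct.lid k H) (Coalgebra.sum_counit_tmul_map_eq f d (repr := r))
  simp only [map_sum, TensorProduct.lid_tmul, one_smul] at key
  rw [cv_apply cu f d r, ← key]
  refine Finset.sum_congr rfl fun i _ => ?_
  simp [cu, Algebra.smul_def]

lemma ca_cu (hact1 : ∀ c : C, act (c ⊗ₜ (1 : H)) = c) (F : D →ₗ[k] C) : ca act F cu = F := by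
  ext d
  have r := Coalgebra.Repr.arbitrary k d
  have key := congrArg (TensorProduct.rid k C) (Coalgebra.sum_map_tmul_counit_eq F d (repr := r))
  simp only [map_sum, TensorProduct.rid_tmul, one_smul] at key
  rw [ca_apply act F cu d r, ← key]
  refine Finset.sum_congr rfl fun i _ => ?_
  have : (cu (k := k) (H := H) (r.right i)) = Coalgebra.counit (R := k) (r.right i) • (1 : H) := by
    simp [cu, Algebra.smul_def]
  rw [this, TensorProduct.tmul_smul, map_smul, hact1]

lemma ca_assoc (hact2 : ∀ (c : C) (g h : H), act (act (c ⊗ₜ g) ⊗ₜ h) = act (c ⊗ₜ (g * h)))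
    (F : D →ₗ[k] C) (f g : D →ₗ[k] H) : ca act (ca act F f) g = ca act F (cv f g) := by
  ext d
  set r := Coalgebra.Repr.arbitrary k d with hr
  have key := Coalgebra.sum_tmul_tmul_eq r
      (fun i => Coalgebra.Repr.arbitrary k (r.left i))
      (fun i => Coalgebra.Repr.arbitrary k (r.right i))
  apply_fun (act ∘ₗ TensorProduct.map F (LinearMap.mul' k H ∘ₗ TensorProduct.map f g)) at key
  simp only [map_sum, LinearMap.comp_apply, TensorProduct.map_tmul, LinearMap.mul'_apply] at key
  calc ca act (ca act F f) g d
      = ∑ i ∈ r.index, act ((ca act F f) (r.left i) ⊗ₜ g (r.right i)) := ca_apply _ _ _ _ r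
    _ = ∑ i ∈ r.index, ∑ j ∈ (Coalgebra.Repr.arbitrary k (r.left i)).index,
          act (F ((Coalgebra.Repr.arbitrary k (r.left i)).left j) ⊗ₜ
            (f ((Coalgebra.Repr.arbitrary k (r.left i)).right j) * g (r.right i))) := by
        refine Finset.sum_congr rfl fun i _ => ?_
        rw [ca_apply act F f _ (Coalgebra.Repr.arbitrary k (r.left i)), TensorProduct.sum_tmul,
          map_sum]
        exact Finset.sum_congr rfl fun j _ => (hact2 _ _ _)
    _ = ∑ i ∈ r.index, ∑ j ∈ (Coalgebra.Repr.arbitrary k (r.right i)).index,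
          act (F (r.left i) ⊗ₜ
            (f ((Coalgebra.Repr.arbitrary k (r.right i)).left j) *
             g ((Coalgebra.Repr.arbitrary k (r.right i)).right j))) := key
    _ = ca act F (cv f g) d := by
        rw [ca_apply act F (cv f g) d r]
        refine Finset.sum_congr rfl fun i _ => ?_
        rw [cv_apply f g _ (Coalgebra.Repr.arbitrary k (r.right i)), TensorProduct.tmul_sum,
          map_sum]


def tRepr {c : C} {h : H} {ι κ : Type*} (rc : Coalgebra.Repr k c ι) (rh : Coalgebra.Repr k h κ) :
    Coalgebra.Repr k (c ⊗ₜ[k] h) (ι × κ) where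
  index := rc.index ×ˢ rh.index
  left p := rc.left p.1 ⊗ₜ rh.left p.2
  right p := rc.right p.1 ⊗ₜ rh.right p.2
  eq := by
    have : CoalgebraStruct.comul (R := k) (c ⊗ₜ[k] h) =
        TensorProduct.tensorTensorTensorComm k C C H H
          (CoalgebraStruct.comul (R := k) c ⊗ₜ CoalgebraStruct.comul (R := k) h) := rfl
    rw [this, ← rc.eq, ← rh.eq, TensorProduct.sum_tmul, map_sum, Finset.sum_product]
    refine Finset.sum_congr rfl fun i _ => ?_
    rw [TensorProduct.tmul_sum, map_sum]
    exact Finset.sum_congr rfl fun j _ => by simp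

variable (act : C ⊗[k] H →ₗ[k] C)

/-- If `act` is comultiplicative, a representation of `comul (act (c ⊗ₜ h))`. -/
def actRepr (hact3 : Coalgebra.comul ∘ₗ act
      = TensorProduct.map act act
        ∘ₗ (TensorProduct.tensorTensorTensorComm k C C H H).toLinearMap
        ∘ₗ TensorProduct.map Coalgebra.comul Coalgebra.comul)
    {c : C} {h : H} {ι κ : Type*} (rc : Coalgebra.Repr k c ι) (rh : Coalgebra.Repr k h κ) :
    Coalgebra.Repr k (act (c ⊗ₜ[k] h)) (ι × κ) where
  index := rc.index ×ˢ rh.index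
  left p := act (rc.left p.1 ⊗ₜ rh.left p.2)
  right p := act (rc.right p.1 ⊗ₜ rh.right p.2)
  eq := by
    have h1 : CoalgebraStruct.comul (R := k) (act (c ⊗ₜ[k] h))
        = TensorProduct.map act act (CoalgebraStruct.comul (R := k) (c ⊗ₜ[k] h)) := by
      have := LinearMap.congr_fun hact3 (c ⊗ₜ[k] h)
      exact this
    rw [h1, ← (tRepr rc rh).eq, map_sum]
    rfl

-- The basic maps on C ⊗ H.
def P : C ⊗[k] H →ₗ[k] H :=
  (TensorProduct.lid k H).toLinearMap ∘ₗ TensorProduct.map Coalgebra.counit LinearMap.id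

def P' : C ⊗[k] H →ₗ[k] H :=
  (TensorProduct.lid k H).toLinearMap ∘ₗ
    TensorProduct.map Coalgebra.counit (HopfAlgebra.antipode k)

def Q (f : C →ₗ[k] H) : C ⊗[k] H →ₗ[k] H :=
  (TensorProduct.rid k H).toLinearMap ∘ₗ TensorProduct.map f Coalgebra.counit

def Eps : C ⊗[k] H →ₗ[k] C :=
  (TensorProduct.rid k C).toLinearMap ∘ₗ TensorProduct.map LinearMap.id Coalgebra.counit

@[simp] lemma P_tmul (c : C) (h : H) :
    P (k := k) (c ⊗ₜ h) = Coalgebra.counit (R := k) c • h := by simp [P]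

@[simp] lemma P'_tmul (c : C) (h : H) :
    P' (k := k) (c ⊗ₜ h) = Coalgebra.counit (R := k) c • HopfAlgebra.antipode k h := by
  simp [P']

@[simp] lemma Q_tmul (f : C →ₗ[k] H) (c : C) (h : H) :
    Q f (c ⊗ₜ h) = Coalgebra.counit (R := k) h • f c := by simp [Q]

@[simp] lemma Eps_tmul (c : C) (h : H) :
    Eps (k := k) (H := H) (c ⊗ₜ h) = Coalgebra.counit (R := k) h • c := by simp [Eps]

@[simp] lemma counit_tmul (c : C) (h : H) :
    Coalgebra.counit (R := k) (c ⊗ₜ[k] h)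
      = Coalgebra.counit (R := k) c * Coalgebra.counit (R := k) h := by
  rw [TensorProduct.counit_tmul, smul_eq_mul, mul_comm]

lemma cu_tmul (c : C) (h : H) :
    cu (k := k) (c ⊗ₜ[k] h)
      = (Coalgebra.counit (R := k) c * Coalgebra.counit (R := k) h) • (1 : H) := by
  simp [cu, Algebra.smul_def, mul_comm]

lemma cuC_apply (c : C) :
    cu (k := k) (H := H) c = Coalgebra.counit (R := k) c • (1 : H) := by
  simp [cu, Algebra.smul_def]

-- collapse helpers
lemma sum_counit_smul {c : C} {ι : Type*} (r : Coalgebra.Repr k c ι) :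
    ∑ i ∈ r.index, Coalgebra.counit (R := k) (r.left i) • r.right i = c := by
  have := congrArg (TensorProduct.lid k C) (Coalgebra.sum_counit_tmul_eq r)
  simp only [map_sum, TensorProduct.lid_tmul, one_smul] at this
  exact this

lemma sum_smul_counit {c : C} {ι : Type*} (r : Coalgebra.Repr k c ι) :
    ∑ i ∈ r.index, Coalgebra.counit (R := k) (r.right i) • r.left i = c := by
  have := congrArg (TensorProduct.rid k C) (Coalgebra.sum_tmul_counit_eq r)
  simp only [map_sum, TensorProduct.rid_tmul, one_smul] at this
  exact this

lemma sum_counit_counit {c : C} {ι : Type*} (r : Coalgebra.Repr k c ι) :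
    ∑ i ∈ r.index,
      Coalgebra.counit (R := k) (r.left i) * Coalgebra.counit (R := k) (r.right i)
      = Coalgebra.counit (R := k) c := by
  have := congrArg (Coalgebra.counit (R := k)) (sum_counit_smul r)
  simpa [map_sum, smul_eq_mul] using this

@[simp] lemma tRepr_index {c : C} {h : H} {ι κ : Type*} (rc : Coalgebra.Repr k c ι) (rh : Coalgebra.Repr k h κ) :
    (tRepr rc rh).index = rc.index ×ˢ rh.index := rfl
@[simp] lemma tRepr_left {c : C} {h : H} {ι κ : Type*} (rc : Coalgebra.Repr k c ι) (rh : Coalgebra.Repr k h κ)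
    (p : ι × κ) : (tRepr rc rh).left p = rc.left p.1 ⊗ₜ rh.left p.2 := rfl
@[simp] lemma tRepr_right {c : C} {h : H} {ι κ : Type*} (rc : Coalgebra.Repr k c ι) (rh : Coalgebra.Repr k h κ)
    (p : ι × κ) : (tRepr rc rh).right p = rc.right p.1 ⊗ₜ rh.right p.2 := rfl

lemma sum_tRepr {M : Type} [AddCommMonoid M] {c : C} {h : H}
    {ι κ : Type*} (rc : Coalgebra.Repr k c ι) (rh : Coalgebra.Repr k h κ) (F : C ⊗[k] H → C ⊗[k] H → M) :
    ∑ p ∈ (tRepr rc rh).index, F ((tRepr rc rh).left p) ((tRepr rc rh).right p)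
      = ∑ i ∈ rc.index, ∑ j ∈ rh.index,
          F (rc.left i ⊗ₜ rh.left j) (rc.right i ⊗ₜ rh.right j) := by
  show ∑ p ∈ rc.index ×ˢ rh.index,
      F (rc.left p.1 ⊗ₜ rh.left p.2) (rc.right p.1 ⊗ₜ rh.right p.2) = _
  exact Finset.sum_product _ _ _

lemma cv_apply_tmul (f g : C ⊗[k] H →ₗ[k] H) (c : C) (h : H)
    {ι κ : Type*} (rc : Coalgebra.Repr k c ι) (rh : Coalgebra.Repr k h κ) :
    cv f g (c ⊗ₜ h) = ∑ i ∈ rc.index, ∑ j ∈ rh.index,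
      f (rc.left i ⊗ₜ rh.left j) * g (rc.right i ⊗ₜ rh.right j) := by
  rw [cv_apply _ _ _ (tRepr rc rh)]
  exact sum_tRepr rc rh (fun x y => f x * g y)

lemma ca_apply_tmul (F : C ⊗[k] H →ₗ[k] C) (f : C ⊗[k] H →ₗ[k] H) (c : C) (h : H)
    {ι κ : Type*} (rc : Coalgebra.Repr k c ι) (rh : Coalgebra.Repr k h κ) :
    ca act F f (c ⊗ₜ h) = ∑ i ∈ rc.index, ∑ j ∈ rh.index,
      act (F (rc.left i ⊗ₜ rh.left j) ⊗ₜ f (rc.right i ⊗ₜ rh.right j)) := by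
  rw [ca_apply _ _ _ _ (tRepr rc rh)]
  exact sum_tRepr rc rh (fun x y => act (F x ⊗ₜ f y))

lemma sum_counit_counit' {c : C} {ι : Type*} (r : Coalgebra.Repr k c ι) :
    ∑ i ∈ r.index,
      Coalgebra.counit (R := k) (r.right i) * Coalgebra.counit (R := k) (r.left i)
      = Coalgebra.counit (R := k) c := by
  rw [Finset.sum_congr rfl fun i _ => mul_comm _ _]
  exact sum_counit_counit r

lemma S1a : cv (P (k := k) (H := H) (C := C)) P' = cu := by
  refine TensorProduct.ext' fun c h => ?_
  rw [cv_apply_tmul _ _ c h (Coalgebra.Repr.arbitrary k c) (Coalgebra.Repr.arbitrary k h),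
    cu_tmul]
  simp only [P_tmul, P'_tmul, smul_mul_assoc, mul_smul_comm, smul_smul, ← Finset.smul_sum]
  simp only [HopfAlgebra.sum_mul_antipode_eq_smul (Coalgebra.Repr.arbitrary k h)]
  rw [← Finset.sum_smul, sum_counit_counit', smul_smul]

lemma S1b : cv (P' (k := k) (H := H) (C := C)) P = cu := by
  refine TensorProduct.ext' fun c h => ?_
  rw [cv_apply_tmul _ _ c h (Coalgebra.Repr.arbitrary k c) (Coalgebra.Repr.arbitrary k h),
    cu_tmul]
  simp only [P_tmul, P'_tmul, smul_mul_assoc, mul_smul_comm, smul_smul, ← Finset.smul_sum]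
  simp only [HopfAlgebra.sum_antipode_mul_eq_smul (Coalgebra.Repr.arbitrary k h)]
  rw [← Finset.sum_smul, sum_counit_counit', smul_smul]

lemma S2 (f g : C →ₗ[k] H) : cv (Q f) (Q g) = Q (cv f g) := by
  refine TensorProduct.ext' fun c h => ?_
  rw [cv_apply_tmul _ _ c h (Coalgebra.Repr.arbitrary k c) (Coalgebra.Repr.arbitrary k h),
    Q_tmul, cv_apply f g c (Coalgebra.Repr.arbitrary k c)]
  simp only [Q_tmul, smul_mul_assoc, mul_smul_comm, smul_smul]
  simp only [← Finset.sum_smul]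
  simp only [sum_counit_counit' (Coalgebra.Repr.arbitrary k h)]
  rw [← Finset.smul_sum]

lemma S2b : Q (cu (k := k) (H := H) (D := C)) = cu := by
  refine TensorProduct.ext' fun c h => ?_
  rw [Q_tmul, cu_tmul, cuC_apply, smul_smul, mul_comm]

end TwistAux


namespace TwistAux

variable {k : Type} [Field k]
variable {H : Type} [Ring H] [HopfAlgebra k H]
variable {C : Type} [AddCommGroup C] [Module k C] [Coalgebra k C]
variable (act : C ⊗[k] H →ₗ[k] C)

/-- `c ⊗ h ↦ S(h) * f(c)`. -/
def M (f : C →ₗ[k] H) : C ⊗[k] H →ₗ[k] H :=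
  LinearMap.mul' k H ∘ₗ TensorProduct.map (HopfAlgebra.antipode k) f
    ∘ₗ (TensorProduct.comm k C H).toLinearMap

@[simp] lemma M_tmul (f : C →ₗ[k] H) (c : C) (h : H) :
    M f (c ⊗ₜ h) = HopfAlgebra.antipode k h * f c := by simp [M]

@[simp] lemma sandwichA_tmul (x u y : H) :
    TwistPaper.sandwichA k H (x ⊗ₜ (u ⊗ₜ y)) = u * x * y := by
  simp [TwistPaper.sandwichA]

lemma repr_counit_smul {A : Type} [AddCommGroup A] [Module k A] [Coalgebra k A]
    {a : A} {ι : Type*} (r : Coalgebra.Repr k a ι) :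
    ∑ i ∈ r.index, Coalgebra.counit (R := k) (r.left i) • r.right i = a := by
  have := congrArg (TensorProduct.lid k A) (Coalgebra.sum_counit_tmul_eq r)
  simp only [map_sum, TensorProduct.lid_tmul, one_smul] at this
  exact this

lemma repr_smul_counit {A : Type} [AddCommGroup A] [Module k A] [Coalgebra k A]
    {a : A} {ι : Type*} (r : Coalgebra.Repr k a ι) :
    ∑ i ∈ r.index, Coalgebra.counit (R := k) (r.right i) • r.left i = a := by
  have := congrArg (TensorProduct.rid k A) (Coalgebra.sum_tmul_counit_eq r)
  simp only [map_sum, TensorProduct.rid_tmul, one_smul] at this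
  exact this

lemma repr_counit_smul_map {A M' : Type} [AddCommGroup A] [Module k A] [Coalgebra k A]
    [AddCommGroup M'] [Module k M'] (f : A →ₗ[k] M') {a : A} {ι : Type*} (r : Coalgebra.Repr k a ι) :
    ∑ i ∈ r.index, Coalgebra.counit (R := k) (r.left i) • f (r.right i) = f a := by
  have := congrArg f (repr_counit_smul r)
  simp only [map_sum, map_smul] at this
  exact this

lemma repr_smul_counit_map {A M' : Type} [AddCommGroup A] [Module k A] [Coalgebra k A]
    [AddCommGroup M'] [Module k M'] (f : A →ₗ[k] M') {a : A} {ι : Type*} (r : Coalgebra.Repr k a ι) :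
    ∑ i ∈ r.index, Coalgebra.counit (R := k) (r.right i) • f (r.left i) = f a := by
  have := congrArg f (repr_smul_counit r)
  simp only [map_sum, map_smul] at this
  exact this

lemma S3a (f : C →ₗ[k] H) : cv (P' (k := k) (H := H) (C := C)) (Q f) = M f := by
  refine TensorProduct.ext' fun c h => ?_
  rw [cv_apply_tmul _ _ c h (Coalgebra.Repr.arbitrary k c) (Coalgebra.Repr.arbitrary k h),
    M_tmul]
  simp only [P'_tmul, Q_tmul, smul_mul_assoc, mul_smul_comm, smul_smul]
  rw [Finset.sum_comm]
  conv_rhs => rw [← repr_smul_counit_map (HopfAlgebra.antipode k)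
    (Coalgebra.Repr.arbitrary k h), ← repr_counit_smul_map f (Coalgebra.Repr.arbitrary k c)]
  rw [Finset.sum_mul_sum]
  simp only [smul_mul_assoc, mul_smul_comm, smul_smul]
  exact Finset.sum_congr rfl fun j _ => Finset.sum_congr rfl fun i _ => by rw [mul_comm]

lemma S3b (f : C →ₗ[k] H)
    (hf : f ∘ₗ act = TwistPaper.sandwichA k H
        ∘ₗ TensorProduct.map f
            (TensorProduct.map (HopfAlgebra.antipode k : H →ₗ[k] H) LinearMap.id
              ∘ₗ Coalgebra.comul)) :
    cv (M f) (P (k := k)) = f ∘ₗ act := by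
  refine TensorProduct.ext' fun c h => ?_
  have hrhs : (f ∘ₗ act) (c ⊗ₜ h) = ∑ j ∈ (Coalgebra.Repr.arbitrary k h).index,
      HopfAlgebra.antipode k ((Coalgebra.Repr.arbitrary k h).left j) * f c *
        (Coalgebra.Repr.arbitrary k h).right j := by
    rw [hf]
    simp only [LinearMap.comp_apply, TensorProduct.map_tmul]
    rw [← (Coalgebra.Repr.arbitrary k h).eq]
    simp [TensorProduct.tmul_sum, map_sum]
  rw [hrhs, cv_apply_tmul _ _ c h (Coalgebra.Repr.arbitrary k c) (Coalgebra.Repr.arbitrary k h)]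
  simp only [M_tmul, P_tmul, mul_smul_comm, smul_mul_assoc, smul_smul]
  rw [Finset.sum_comm]
  conv_rhs => rw [← repr_smul_counit_map f (Coalgebra.Repr.arbitrary k c)]
  simp only [Finset.mul_sum, Finset.sum_mul, smul_mul_assoc, mul_smul_comm, smul_smul]

lemma S3full (f : C →ₗ[k] H)
    (hf : f ∘ₗ act = TwistPaper.sandwichA k H
        ∘ₗ TensorProduct.map f
            (TensorProduct.map (HopfAlgebra.antipode k : H →ₗ[k] H) LinearMap.id
              ∘ₗ Coalgebra.comul)) :
    f ∘ₗ act = cv P' (cv (Q f) P) := by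
  rw [← cv_assoc, S3a, S3b act f hf]

lemma S4 (hact1 : ∀ c : C, act (c ⊗ₜ (1 : H)) = c)
    (hact2 : ∀ (c : C) (g h : H), act (act (c ⊗ₜ g) ⊗ₜ h) = act (c ⊗ₜ (g * h))) :
    ca act act P' = Eps := by
  refine TensorProduct.ext' fun c h => ?_
  rw [ca_apply_tmul act act P' c h (Coalgebra.Repr.arbitrary k c)
    (Coalgebra.Repr.arbitrary k h), Eps_tmul]
  simp only [P'_tmul, TensorProduct.tmul_smul, map_smul, hact2]
  simp only [← Finset.smul_sum]
  have inner : ∀ x : C,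
      ∑ j ∈ (Coalgebra.Repr.arbitrary k h).index,
        act (x ⊗ₜ ((Coalgebra.Repr.arbitrary k h).left j *
          HopfAlgebra.antipode k ((Coalgebra.Repr.arbitrary k h).right j)))
      = Coalgebra.counit (R := k) h • x := fun x => by
    rw [← map_sum, ← TensorProduct.tmul_sum,
      HopfAlgebra.sum_mul_antipode_eq_smul (Coalgebra.Repr.arbitrary k h),
      TensorProduct.tmul_smul, map_smul, hact1]
  simp only [inner]
  rw [Finset.sum_congr rfl fun i _ => smul_comm _ _ _, ← Finset.smul_sum,
    repr_smul_counit (Coalgebra.Repr.arbitrary k c)]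

lemma psiV_apply (f : C →ₗ[k] H) (c : C) {ι : Type*} (r : Coalgebra.Repr k c ι) :
    TwistPaper.psiV k H C act f c = ∑ i ∈ r.index, act (r.left i ⊗ₜ f (r.right i)) := by
  exact ca_apply act LinearMap.id f c r

lemma S5 (f : C →ₗ[k] H) :
    ca act Eps (Q f) = TwistPaper.psiV k H C act f ∘ₗ Eps := by
  refine TensorProduct.ext' fun c h => ?_
  rw [ca_apply_tmul act Eps (Q f) c h (Coalgebra.Repr.arbitrary k c)
    (Coalgebra.Repr.arbitrary k h), LinearMap.comp_apply, Eps_tmul, map_smul,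
    psiV_apply act f c (Coalgebra.Repr.arbitrary k c)]
  simp only [Eps_tmul, Q_tmul, TensorProduct.smul_tmul', TensorProduct.tmul_smul, map_smul,
    smul_smul]
  simp only [← TensorProduct.smul_tmul', map_smul]
  simp only [← Finset.sum_smul]
  simp only [sum_counit_counit' (Coalgebra.Repr.arbitrary k h)]
  rw [← Finset.smul_sum]

lemma S6 (F : C →ₗ[k] C) :
    ca act (F ∘ₗ Eps) P = act ∘ₗ TensorProduct.map F LinearMap.id := by
  refine TensorProduct.ext' fun c h => ?_
  rw [ca_apply_tmul act _ _ c h (Coalgebra.Repr.arbitrary k c) (Coalgebra.Repr.arbitrary k h)]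
  rw [LinearMap.comp_apply, TensorProduct.map_tmul, LinearMap.id_coe, id_eq]
  conv_rhs => rw [← repr_smul_counit (Coalgebra.Repr.arbitrary k c),
    ← repr_counit_smul (Coalgebra.Repr.arbitrary k h)]
  simp only [LinearMap.comp_apply, Eps_tmul, P_tmul, map_smul, map_sum,
    TensorProduct.smul_tmul', TensorProduct.tmul_smul, TensorProduct.sum_tmul,
    TensorProduct.tmul_sum, smul_smul]
  simp only [← TensorProduct.smul_tmul', TensorProduct.tmul_smul, map_smul, Finset.smul_sum,
    smul_smul]
  rw [Finset.sum_comm]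
  refine Finset.sum_congr rfl fun j _ => Finset.sum_congr rfl fun i _ => ?_
  rw [mul_comm]

lemma sum_actRepr
    (hact3 : Coalgebra.comul ∘ₗ act
      = TensorProduct.map act act
        ∘ₗ (TensorProduct.tensorTensorTensorComm k C C H H).toLinearMap
        ∘ₗ TensorProduct.map Coalgebra.comul Coalgebra.comul)
    {M' : Type} [AddCommMonoid M'] {c : C} {h : H}
    {ι κ : Type*} (rc : Coalgebra.Repr k c ι) (rh : Coalgebra.Repr k h κ) (F : C → C → M') :
    ∑ p ∈ (actRepr act hact3 rc rh).index,
      F ((actRepr act hact3 rc rh).left p) ((actRepr act hact3 rc rh).right p)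
      = ∑ i ∈ rc.index, ∑ j ∈ rh.index,
          F (act (rc.left i ⊗ₜ rh.left j)) (act (rc.right i ⊗ₜ rh.right j)) := by
  show ∑ p ∈ rc.index ×ˢ rh.index,
      F (act (rc.left p.1 ⊗ₜ rh.left p.2)) (act (rc.right p.1 ⊗ₜ rh.right p.2)) = _
  exact Finset.sum_product _ _ _

lemma psiV_act
    (hact3 : Coalgebra.comul ∘ₗ act
      = TensorProduct.map act act
        ∘ₗ (TensorProduct.tensorTensorTensorComm k C C H H).toLinearMap
        ∘ₗ TensorProduct.map Coalgebra.comul Coalgebra.comul)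
    (f : C →ₗ[k] H) :
    TwistPaper.psiV k H C act f ∘ₗ act = ca act act (f ∘ₗ act) := by
  refine TensorProduct.ext' fun c h => ?_
  rw [LinearMap.comp_apply,
    psiV_apply act f _ (actRepr act hact3 (Coalgebra.Repr.arbitrary k c)
      (Coalgebra.Repr.arbitrary k h)),
    sum_actRepr act hact3 _ _ (fun x y => act (x ⊗ₜ f y)),
    ca_apply_tmul act act (f ∘ₗ act) c h (Coalgebra.Repr.arbitrary k c)
      (Coalgebra.Repr.arbitrary k h)]
  rfl

lemma cv_act
    (hact3 : Coalgebra.comul ∘ₗ act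
      = TensorProduct.map act act
        ∘ₗ (TensorProduct.tensorTensorTensorComm k C C H H).toLinearMap
        ∘ₗ TensorProduct.map Coalgebra.comul Coalgebra.comul)
    (f g : C →ₗ[k] H) :
    cv (f ∘ₗ act) (g ∘ₗ act) = cv f g ∘ₗ act := by
  refine TensorProduct.ext' fun c h => ?_
  rw [cv_apply_tmul _ _ c h (Coalgebra.Repr.arbitrary k c) (Coalgebra.Repr.arbitrary k h),
    LinearMap.comp_apply,
    cv_apply f g _ (actRepr act hact3 (Coalgebra.Repr.arbitrary k c)
      (Coalgebra.Repr.arbitrary k h)),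
    sum_actRepr act hact3 _ _ (fun x y => f x * g y)]
  rfl

lemma cu_act
    (hact4 : (Coalgebra.counit : C →ₗ[k] k) ∘ₗ act
      = (TensorProduct.lid k k).toLinearMap
        ∘ₗ TensorProduct.map Coalgebra.counit Coalgebra.counit) :
    (cu (k := k) (H := H) (D := C)) ∘ₗ act = cu := by
  refine TensorProduct.ext' fun c h => ?_
  rw [LinearMap.comp_apply, cuC_apply, cu_tmul]
  have h1 : Coalgebra.counit (R := k) (act (c ⊗ₜ h))
      = Coalgebra.counit (R := k) c * Coalgebra.counit (R := k) h := by
    have := LinearMap.congr_fun hact4 (c ⊗ₜ[k] h)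
    simpa [smul_eq_mul] using this
  rw [h1]

lemma chain (hact1 : ∀ c : C, act (c ⊗ₜ (1 : H)) = c)
    (hact2 : ∀ (c : C) (g h : H), act (act (c ⊗ₜ g) ⊗ₜ h) = act (c ⊗ₜ (g * h)))
    (f : C →ₗ[k] H) (hf : f ∘ₗ act = cv P' (cv (Q f) P)) :
    ca act act (f ∘ₗ act)
      = act ∘ₗ TensorProduct.map (TwistPaper.psiV k H C act f) LinearMap.id := by
  rw [hf, ← cv_assoc, ← ca_assoc act hact2, ← ca_assoc act hact2, S4 act hact1 hact2,
    S5 act f, S6 act]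

lemma comp_eq (hact1 : ∀ c : C, act (c ⊗ₜ (1 : H)) = c)
    (hact2 : ∀ (c : C) (g h : H), act (act (c ⊗ₜ g) ⊗ₜ h) = act (c ⊗ₜ (g * h)))
    (hact3 : Coalgebra.comul ∘ₗ act
      = TensorProduct.map act act
        ∘ₗ (TensorProduct.tensorTensorTensorComm k C C H H).toLinearMap
        ∘ₗ TensorProduct.map Coalgebra.comul Coalgebra.comul)
    (f g : C →ₗ[k] H) (hf : f ∘ₗ act = cv P' (cv (Q f) P)) :
    TwistPaper.psiV k H C act f ∘ₗ TwistPaper.psiV k H C act g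
      = ca act (TwistPaper.psiV k H C act f) g := by
  refine LinearMap.ext fun c => ?_
  rw [LinearMap.comp_apply, psiV_apply act g c (Coalgebra.Repr.arbitrary k c), map_sum]
  have h1 : ∀ x : C ⊗[k] H,
      TwistPaper.psiV k H C act f (act x)
        = act (TensorProduct.map (TwistPaper.psiV k H C act f) LinearMap.id x) := fun x => by
    have := LinearMap.congr_fun (psiV_act act hact3 f) x
    rw [LinearMap.comp_apply] at this
    rw [this, chain act hact1 hact2 f hf, LinearMap.comp_apply]
  simp only [h1, TensorProduct.map_tmul, LinearMap.id_coe, id_eq]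
  rw [ca_apply act (TwistPaper.psiV k H C act f) g c (Coalgebra.Repr.arbitrary k c)]

end TwistAux

variable (k) (H) (C)

/-- Proposition 2.3, second part: if `v` is moreover convolution
invertible with convolution inverse `w`, then `ψ(c) = c₁·v(c₂)` is bijective,
with inverse `φ(c) = c₁·w(c₂)`. -/
theorem TwistPaper.psi_bijective
    (act : C ⊗[k] H →ₗ[k] C) (hact : IsModuleCoalg k H C act)
    (τ lam : C →ₗ[k] H ⊗[k] C)
    (hτ : IsTwisting k H C act τ) (hlam : IsTwisting k H C act lam)
    (v w : C →ₗ[k] H) (hv : VCond k H C act τ lam v)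
    (hvw : convH k H C v w = unitH k H C) (hwv : convH k H C w v = unitH k H C) :
    psiV k H C act w ∘ₗ psiV k H C act v = LinearMap.id ∧
    psiV k H C act v ∘ₗ psiV k H C act w = LinearMap.id := by
  obtain ⟨hact1, hact2, hact3, hact4⟩ := hact
  have hA : v ∘ₗ act = TwistAux.cv TwistAux.P' (TwistAux.cv (TwistAux.Q v) TwistAux.P) :=
    TwistAux.S3full act v hv.2.1
  have hvw' : TwistAux.cv v w = TwistAux.cu := hvw
  have hwv' : TwistAux.cv w v = TwistAux.cu := hwv
  have hw : w ∘ₗ act = TwistAux.cv TwistAux.P' (TwistAux.cv (TwistAux.Q w) TwistAux.P) := by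
    have hBA : TwistAux.cv (w ∘ₗ act) (v ∘ₗ act) = TwistAux.cu := by
      rw [TwistAux.cv_act act hact3, hwv', TwistAux.cu_act act hact4]
    have hAU : TwistAux.cv (v ∘ₗ act)
        (TwistAux.cv TwistAux.P' (TwistAux.cv (TwistAux.Q w) TwistAux.P)) = TwistAux.cu := by
      rw [hA, TwistAux.cv_assoc, TwistAux.cv_assoc,
        ← TwistAux.cv_assoc (TwistAux.P (k := k) (H := H) (C := C)) TwistAux.P'
          (TwistAux.cv (TwistAux.Q w) TwistAux.P),
        TwistAux.S1a, TwistAux.cu_cv,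
        ← TwistAux.cv_assoc (TwistAux.Q v) (TwistAux.Q w) (TwistAux.P (k := k) (H := H) (C := C)),
        TwistAux.S2, hvw', TwistAux.S2b, TwistAux.cu_cv, TwistAux.S1b]
    calc w ∘ₗ act = TwistAux.cv (w ∘ₗ act) TwistAux.cu := (TwistAux.cv_cu _).symm
      _ = TwistAux.cv (w ∘ₗ act) (TwistAux.cv (v ∘ₗ act)
            (TwistAux.cv TwistAux.P' (TwistAux.cv (TwistAux.Q w) TwistAux.P))) := by rw [hAU]
      _ = TwistAux.cv (TwistAux.cv (w ∘ₗ act) (v ∘ₗ act))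
            (TwistAux.cv TwistAux.P' (TwistAux.cv (TwistAux.Q w) TwistAux.P)) :=
          (TwistAux.cv_assoc _ _ _).symm
      _ = TwistAux.cv TwistAux.cu
            (TwistAux.cv TwistAux.P' (TwistAux.cv (TwistAux.Q w) TwistAux.P)) := by rw [hBA]
      _ = TwistAux.cv TwistAux.P' (TwistAux.cv (TwistAux.Q w) TwistAux.P) := TwistAux.cu_cv _
  constructor
  · rw [TwistAux.comp_eq act hact1 hact2 hact3 w v hw,
      show psiV k H C act w = TwistAux.ca act LinearMap.id w from rfl,
      TwistAux.ca_assoc act hact2, hwv', TwistAux.ca_cu act hact1]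
  · rw [TwistAux.comp_eq act hact1 hact2 hact3 v w hA,
      show psiV k H C act v = TwistAux.ca act LinearMap.id v from rfl,
      TwistAux.ca_assoc act hact2, hvw', TwistAux.ca_cu act hact1]
end
end

section
/- The relation ∼ on the set of twistings of C, defined by τ ∼ λ if and only if there exists a convolution invertible v : C → H satisfying ε_H ∘ v = ε_C, v(c·h) = S(h₁)v(c)h₂ and c_{1,(-1)}v(c₂)₁ ⊗ c_{1,(0)}·v(c₂)₂ = v(c₁)c_{2,-1} ⊗ c_{2,0,1}·v(c_{2,0,2}), is an equivalence relation. -/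
open TensorProduct LinearMap Coalgebra

noncomputable section

variable (k : Type) [Field k]
variable (H : Type) [Ring H] [HopfAlgebra k H]
variable (C : Type) [AddCommGroup C] [Module k C] [Coalgebra k C]

namespace TwistPaper



section Generic
variable {D A B : Type} [AddCommGroup D] [Module k D] [Coalgebra k D]
  [Ring A] [Algebra k A] [AddCommGroup B] [Module k B]

/-- convolution product -/
def cv (u v : D →ₗ[k] A) : D →ₗ[k] A :=
  LinearMap.mul' k A ∘ₗ TensorProduct.map u v ∘ₗ Coalgebra.comul

/-- convolution unit -/
def un : D →ₗ[k] A := Algebra.linearMap k A ∘ₗ Coalgebra.counit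

lemma cv_apply (u v : D →ₗ[k] A) (d : D) {ι : Type*} (r : Coalgebra.Repr k d ι) :
    cv k u v d = ∑ i ∈ r.index, u (r.left i) * v (r.right i) := by
  simp only [cv, LinearMap.comp_apply, ← r.eq, map_sum, TensorProduct.map_tmul,
    LinearMap.mul'_apply]

lemma sum_counit_smul_s13 (f : D →ₗ[k] B) (d : D) {ι : Type*} (r : Coalgebra.Repr k d ι) :
    ∑ i ∈ r.index, Coalgebra.counit (R := k) (r.left i) • f (r.right i) = f d := by
  have h := Coalgebra.sum_counit_tmul_map_eq (R := k) f d (repr := r)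
  apply_fun (TensorProduct.lid k B) at h
  simp only [map_sum, TensorProduct.lid_tmul, one_smul] at h
  exact h

lemma sum_smul_counit (f : D →ₗ[k] B) (d : D) {ι : Type*} (r : Coalgebra.Repr k d ι) :
    ∑ i ∈ r.index, Coalgebra.counit (R := k) (r.right i) • f (r.left i) = f d := by
  have h := Coalgebra.sum_map_tmul_counit_eq (R := k) f d (repr := r)
  apply_fun (TensorProduct.rid k B) at h
  simp only [map_sum, TensorProduct.rid_tmul, one_smul] at h
  exact h

lemma sum_counit_counit (d : D) {ι : Type*} (r : Coalgebra.Repr k d ι) :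
    ∑ i ∈ r.index, Coalgebra.counit (R := k) (r.left i) *
      Coalgebra.counit (R := k) (r.right i) = Coalgebra.counit (R := k) d := by
  simpa [smul_eq_mul] using sum_counit_smul_s13 k (Coalgebra.counit : D →ₗ[k] k) d r

lemma sum_counit_smul_self (d : D) {ι : Type*} (r : Coalgebra.Repr k d ι) :
    ∑ i ∈ r.index, Coalgebra.counit (R := k) (r.left i) • r.right i = d := by
  simpa using sum_counit_smul_s13 k (LinearMap.id : D →ₗ[k] D) d r

lemma sum_smul_counit_self (d : D) {ι : Type*} (r : Coalgebra.Repr k d ι) :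
    ∑ i ∈ r.index, Coalgebra.counit (R := k) (r.right i) • r.left i = d := by
  simpa using sum_smul_counit k (LinearMap.id : D →ₗ[k] D) d r

lemma coassoc_sum (Φ : D ⊗[k] (D ⊗[k] D) →ₗ[k] B) (d : D) :
    ∑ i ∈ (ℛ k d).index, ∑ j ∈ (ℛ k ((ℛ k d).left i)).index,
      Φ ((ℛ k ((ℛ k d).left i)).left j ⊗ₜ
        ((ℛ k ((ℛ k d).left i)).right j ⊗ₜ (ℛ k d).right i))
    = ∑ i ∈ (ℛ k d).index, ∑ j ∈ (ℛ k ((ℛ k d).right i)).index,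
      Φ ((ℛ k d).left i ⊗ₜ
        ((ℛ k ((ℛ k d).right i)).left j ⊗ₜ (ℛ k ((ℛ k d).right i)).right j)) := by
  have h := Coalgebra.sum_tmul_tmul_eq (ℛ k d) (fun i => ℛ k ((ℛ k d).left i))
    (fun i => ℛ k ((ℛ k d).right i))
  apply_fun Φ at h
  simpa [map_sum] using h

lemma cv_assoc (u v w : D →ₗ[k] A) : cv k (cv k u v) w = cv k u (cv k v w) := by
  ext d
  rw [cv_apply k _ _ d (ℛ k d), cv_apply k _ _ d (ℛ k d)]
  have key := coassoc_sum k (LinearMap.mul' k A ∘ₗ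
    TensorProduct.map u (LinearMap.mul' k A ∘ₗ TensorProduct.map v w)) d
  simp only [LinearMap.comp_apply, TensorProduct.map_tmul, LinearMap.mul'_apply] at key
  calc ∑ i ∈ (ℛ k d).index, cv k u v ((ℛ k d).left i) * w ((ℛ k d).right i)
      = ∑ i ∈ (ℛ k d).index, ∑ j ∈ (ℛ k ((ℛ k d).left i)).index,
          u ((ℛ k ((ℛ k d).left i)).left j) *
            ((v ((ℛ k ((ℛ k d).left i)).right j)) * w ((ℛ k d).right i)) := by
        refine Finset.sum_congr rfl fun i _ => ?_
        rw [cv_apply k u v _ (ℛ k ((ℛ k d).left i)), Finset.sum_mul]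
        exact Finset.sum_congr rfl fun j _ => by rw [mul_assoc]
    _ = ∑ i ∈ (ℛ k d).index, ∑ j ∈ (ℛ k ((ℛ k d).right i)).index,
          u ((ℛ k d).left i) * (v ((ℛ k ((ℛ k d).right i)).left j) *
            w ((ℛ k ((ℛ k d).right i)).right j)) := key
    _ = ∑ i ∈ (ℛ k d).index, u ((ℛ k d).left i) * cv k v w ((ℛ k d).right i) := by
        refine Finset.sum_congr rfl fun i _ => ?_
        rw [cv_apply k v w _ (ℛ k ((ℛ k d).right i)), Finset.mul_sum]

lemma cv_un_left (u : D →ₗ[k] A) : cv k (un k) u = u := by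
  ext d
  rw [cv_apply k _ _ d (ℛ k d)]
  calc ∑ i ∈ (ℛ k d).index, un k ((ℛ k d).left i) * u ((ℛ k d).right i)
      = ∑ i ∈ (ℛ k d).index,
          Coalgebra.counit (R := k) ((ℛ k d).left i) • u ((ℛ k d).right i) := by
        refine Finset.sum_congr rfl fun i _ => ?_
        simp [un, Algebra.smul_def]
    _ = u d := sum_counit_smul_s13 k u d (ℛ k d)

lemma cv_un_right (u : D →ₗ[k] A) : cv k u (un k) = u := by
  ext d
  rw [cv_apply k _ _ d (ℛ k d)]
  calc ∑ i ∈ (ℛ k d).index, u ((ℛ k d).left i) * un k ((ℛ k d).right i)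
      = ∑ i ∈ (ℛ k d).index,
          Coalgebra.counit (R := k) ((ℛ k d).right i) • u ((ℛ k d).left i) := by
        refine Finset.sum_congr rfl fun i _ => ?_
        rw [un]
        simp [Algebra.smul_def, Algebra.commutes]
    _ = u d := sum_smul_counit k u d (ℛ k d)

end Generic

set_option linter.unusedSectionVars false
section Machinery
variable (act : C ⊗[k] H →ₗ[k] C)

/-- left multiplication `H ⊗ (H ⊗ C) → H ⊗ C`. -/
def Lmul : H ⊗[k] (H ⊗[k] C) →ₗ[k] H ⊗[k] C :=
  TensorProduct.map (LinearMap.mul' k H) LinearMap.id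
    ∘ₗ (TensorProduct.assoc k H H C).symm.toLinearMap

@[simp] lemma Lmul_tmul (g g' : H) (c : C) :
    Lmul k H C (g ⊗ₜ (g' ⊗ₜ c)) = (g * g') ⊗ₜ c := by
  simp [Lmul]

lemma Lmul_mul (g g' : H) (t : H ⊗[k] C) :
    Lmul k H C (g ⊗ₜ Lmul k H C (g' ⊗ₜ t)) = Lmul k H C ((g * g') ⊗ₜ t) := by
  induction t using TensorProduct.induction_on with
  | zero => simp [TensorProduct.tmul_zero]
  | tmul a c => simp [mul_assoc]
  | add s t hs ht => simp only [TensorProduct.tmul_add, map_add, hs, ht]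

lemma Lmul_one (t : H ⊗[k] C) : Lmul k H C ((1 : H) ⊗ₜ t) = t := by
  induction t using TensorProduct.induction_on with
  | zero => simp [TensorProduct.tmul_zero]
  | tmul a c => simp
  | add s t hs ht => simp only [TensorProduct.tmul_add, map_add, hs, ht]

lemma idT_Lmul (g : C →ₗ[k] C) (h : H) (t : H ⊗[k] C) :
    TensorProduct.map LinearMap.id g (Lmul k H C (h ⊗ₜ t))
      = Lmul k H C (h ⊗ₜ TensorProduct.map LinearMap.id g t) := by
  induction t using TensorProduct.induction_on with
  | zero => simp [TensorProduct.tmul_zero]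
  | tmul a c => simp
  | add s t hs ht => simp only [TensorProduct.tmul_add, map_add, hs, ht]

/-- right multiplication of `H ⊗ H` on `H ⊗ C`. -/
def Rmul : (H ⊗[k] C) ⊗[k] (H ⊗[k] H) →ₗ[k] H ⊗[k] C :=
  TensorProduct.map (LinearMap.mul' k H) act
    ∘ₗ (TensorProduct.tensorTensorTensorComm k H C H H).toLinearMap

@[simp] lemma Rmul_tmul (g : H) (c : C) (p q : H) :
    Rmul k H C act ((g ⊗ₜ c) ⊗ₜ (p ⊗ₜ q)) = (g * p) ⊗ₜ act (c ⊗ₜ q) := by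
  simp [Rmul]

variable (hact : IsModuleCoalg k H C act)
include hact

lemma Rmul_mul (t : H ⊗[k] C) (s s' : H ⊗[k] H) :
    Rmul k H C act (Rmul k H C act (t ⊗ₜ s) ⊗ₜ s') = Rmul k H C act (t ⊗ₜ (s * s')) := by
  induction t using TensorProduct.induction_on with
  | zero => simp [TensorProduct.zero_tmul, TensorProduct.tmul_zero]
  | add a b ha hb => simp only [TensorProduct.add_tmul, map_add, ha, hb]
  | tmul g c =>
    induction s using TensorProduct.induction_on with
    | zero => simp [TensorProduct.zero_tmul, TensorProduct.tmul_zero]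
    | add a b ha hb => simp only [TensorProduct.add_tmul, TensorProduct.tmul_add, add_mul,
        map_add, ha, hb]
    | tmul p q =>
      induction s' using TensorProduct.induction_on with
      | zero => simp [TensorProduct.tmul_zero]
      | add a b ha hb => simp only [TensorProduct.tmul_add, mul_add, map_add, ha, hb]
      | tmul p' q' =>
        simp only [Rmul_tmul, Algebra.TensorProduct.tmul_mul_tmul, mul_assoc,
          hact.2.1 c q q']

lemma Rmul_one (t : H ⊗[k] C) :
    Rmul k H C act (t ⊗ₜ ((1 : H) ⊗ₜ (1 : H))) = t := by
  induction t using TensorProduct.induction_on with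
  | zero => simp [TensorProduct.zero_tmul]
  | tmul a c => simp [hact.1 c]
  | add s t hs ht => simp only [TensorProduct.add_tmul, map_add, hs, ht]

omit hact

lemma Rmul_Lmul (g : H) (t : H ⊗[k] C) (s : H ⊗[k] H) :
    Rmul k H C act (Lmul k H C (g ⊗ₜ t) ⊗ₜ s) = Lmul k H C (g ⊗ₜ Rmul k H C act (t ⊗ₜ s)) := by
  induction t using TensorProduct.induction_on with
  | zero => simp [TensorProduct.zero_tmul, TensorProduct.tmul_zero]
  | add a b ha hb => simp only [TensorProduct.tmul_add, TensorProduct.add_tmul, map_add, ha, hb]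
  | tmul g' c =>
    induction s using TensorProduct.induction_on with
    | zero => simp [TensorProduct.tmul_zero]
    | add a b ha hb => simp only [TensorProduct.tmul_add, map_add, ha, hb]
    | tmul p q => simp [mul_assoc]

lemma idT_Rmul (g : C →ₗ[k] C) (hg : ∀ (c : C) (h : H), g (act (c ⊗ₜ h)) = act (g c ⊗ₜ h))
    (t : H ⊗[k] C) (s : H ⊗[k] H) :
    TensorProduct.map LinearMap.id g (Rmul k H C act (t ⊗ₜ s))
      = Rmul k H C act (TensorProduct.map LinearMap.id g t ⊗ₜ s) := by
  induction t using TensorProduct.induction_on with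
  | zero => simp [TensorProduct.zero_tmul, TensorProduct.tmul_zero]
  | add a b ha hb => simp only [TensorProduct.add_tmul, map_add, ha, hb]
  | tmul p c =>
    induction s using TensorProduct.induction_on with
    | zero => simp [TensorProduct.tmul_zero]
    | add a b ha hb => simp only [TensorProduct.tmul_add, map_add, ha, hb]
    | tmul p' q => simp [hg]

/-- left convolution action of `Hom(C,H)` on `Hom(C, H ⊗ C)`. -/
def Lact (v : C →ₗ[k] H) (x : C →ₗ[k] H ⊗[k] C) : C →ₗ[k] H ⊗[k] C :=
  Lmul k H C ∘ₗ TensorProduct.map v x ∘ₗ Coalgebra.comul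

/-- right convolution action of `Hom(C, H ⊗ H)` on `Hom(C, H ⊗ C)`. -/
def Ract (x : C →ₗ[k] H ⊗[k] C) (a : C →ₗ[k] H ⊗[k] H) : C →ₗ[k] H ⊗[k] C :=
  Rmul k H C act ∘ₗ TensorProduct.map x a ∘ₗ Coalgebra.comul

lemma eq22R_eq (τ : C →ₗ[k] H ⊗[k] C) (v : C →ₗ[k] H) :
    eq22R k H C act τ v
      = Lact k H C v (TensorProduct.map LinearMap.id (psiV k H C act v) ∘ₗ τ) := rfl

lemma eq22L_eq (lam : C →ₗ[k] H ⊗[k] C) (v : C →ₗ[k] H) :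
    eq22L k H C act lam v = Ract k H C act lam (Coalgebra.comul ∘ₗ v) := rfl

lemma Lact_apply (v : C →ₗ[k] H) (x : C →ₗ[k] H ⊗[k] C) (d : C) {ι : Type*} (r : Coalgebra.Repr k d ι) :
    Lact k H C v x d = ∑ i ∈ r.index, Lmul k H C (v (r.left i) ⊗ₜ x (r.right i)) := by
  simp only [Lact, LinearMap.comp_apply, ← r.eq, map_sum, TensorProduct.map_tmul]

lemma Ract_apply (x : C →ₗ[k] H ⊗[k] C) (a : C →ₗ[k] H ⊗[k] H) (d : C)
    {ι : Type*} (r : Coalgebra.Repr k d ι) :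
    Ract k H C act x a d = ∑ i ∈ r.index, Rmul k H C act (x (r.left i) ⊗ₜ a (r.right i)) := by
  simp only [Ract, LinearMap.comp_apply, ← r.eq, map_sum, TensorProduct.map_tmul]

lemma psiV_apply_s13 (v : C →ₗ[k] H) (d : C) {ι : Type*} (r : Coalgebra.Repr k d ι) :
    psiV k H C act v d = ∑ i ∈ r.index, act (r.left i ⊗ₜ v (r.right i)) := by
  simp only [psiV, LinearMap.comp_apply, ← r.eq, map_sum, TensorProduct.map_tmul,
    LinearMap.id_coe, id_eq]

/-- the map `c ⊗ h ↦ S(h₁) v(c) h₂`. -/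
def Fmap (v : C →ₗ[k] H) : C ⊗[k] H →ₗ[k] H :=
  sandwichA k H
    ∘ₗ TensorProduct.map v
        (TensorProduct.map (HopfAlgebra.antipode k : H →ₗ[k] H) LinearMap.id
          ∘ₗ Coalgebra.comul)

@[simp] lemma sandwichA_tmul (x p q : H) :
    sandwichA k H (x ⊗ₜ (p ⊗ₜ q)) = p * x * q := by
  simp [sandwichA, mul_assoc]

lemma Fmap_apply (v : C →ₗ[k] H) (c : C) (h : H) {κ : Type*} (rh : Coalgebra.Repr k h κ) :
    Fmap k H C v (c ⊗ₜ h)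
      = ∑ j ∈ rh.index, HopfAlgebra.antipode (R := k) (rh.left j) * v c * rh.right j := by
  simp only [Fmap, LinearMap.comp_apply, TensorProduct.map_tmul, ← rh.eq, map_sum,
    TensorProduct.tmul_sum, LinearMap.id_coe, id_eq, sandwichA_tmul]


/-- `c ⊗ h ↦ ε(c) h`. -/
def eH : C ⊗[k] H →ₗ[k] H :=
  (TensorProduct.lid k H).toLinearMap ∘ₗ TensorProduct.map Coalgebra.counit LinearMap.id

@[simp] lemma eH_tmul (c : C) (h : H) :
    eH k H C (c ⊗ₜ h) = Coalgebra.counit (R := k) c • h := by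
  simp [eH]

/-- `c ⊗ h ↦ ε(h) u(c)`. -/
def uCm (u : C →ₗ[k] H) : C ⊗[k] H →ₗ[k] H :=
  (TensorProduct.rid k H).toLinearMap ∘ₗ TensorProduct.map u Coalgebra.counit

@[simp] lemma uCm_tmul (u : C →ₗ[k] H) (c : C) (h : H) :
    uCm k H C u (c ⊗ₜ h) = Coalgebra.counit (R := k) h • u c := by
  simp [uCm]

/-- `c ⊗ h ↦ u(c) * h`. -/
def Mm (u : C →ₗ[k] H) : C ⊗[k] H →ₗ[k] H :=
  LinearMap.mul' k H ∘ₗ TensorProduct.map u LinearMap.id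

@[simp] lemma Mm_tmul (u : C →ₗ[k] H) (c : C) (h : H) :
    Mm k H C u (c ⊗ₜ h) = u c * h := by
  simp [Mm]

lemma counit_CH (c : C) (h : H) :
    Coalgebra.counit (R := k) (c ⊗ₜ[k] h)
      = Coalgebra.counit (R := k) c * Coalgebra.counit (R := k) h := by
  simp [mul_comm]

lemma cvCH_apply {A : Type} [Ring A] [Algebra k A] (x y : C ⊗[k] H →ₗ[k] A)
    (c : C) (h : H) {ι : Type*} (rc : Coalgebra.Repr k c ι) {κ : Type*} (rh : Coalgebra.Repr k h κ) :
    cv k x y (c ⊗ₜ h) = ∑ i ∈ rc.index, ∑ j ∈ rh.index,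
      x (rc.left i ⊗ₜ rh.left j) * y (rc.right i ⊗ₜ rh.right j) := by
  have hc : Coalgebra.comul (R := k) (c ⊗ₜ[k] h)
      = TensorProduct.tensorTensorTensorComm k C C H H
          (TensorProduct.map Coalgebra.comul Coalgebra.comul (c ⊗ₜ h)) := rfl
  rw [cv, LinearMap.comp_apply, LinearMap.comp_apply, hc, TensorProduct.map_tmul,
    ← rc.eq, ← rh.eq]
  simp [TensorProduct.sum_tmul, TensorProduct.tmul_sum, map_sum,
    TensorProduct.tensorTensorTensorComm_tmul]
  rw [Finset.sum_comm]

lemma unCH_tmul (c : C) (h : H) :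
    (un k : C ⊗[k] H →ₗ[k] H) (c ⊗ₜ h)
      = Coalgebra.counit (R := k) c •
          algebraMap k H (Coalgebra.counit (R := k) h) := by
  simp [un, counit_CH, Algebra.linearMap_apply, map_mul, Algebra.smul_def]
  exact Algebra.commutes _ _

include hact

lemma comul_act_s13 (c : C) (h : H) {ι : Type*} (rc : Coalgebra.Repr k c ι) {κ : Type*} (rh : Coalgebra.Repr k h κ) :
    Coalgebra.comul (R := k) (act (c ⊗ₜ h))
      = ∑ i ∈ rc.index, ∑ j ∈ rh.index,
          act (rc.left i ⊗ₜ rh.left j) ⊗ₜ[k] act (rc.right i ⊗ₜ rh.right j) := by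
  have h1 := LinearMap.congr_fun hact.2.2.1 (c ⊗ₜ[k] h)
  simp only [LinearMap.comp_apply, TensorProduct.map_tmul] at h1
  rw [h1, ← rc.eq, ← rh.eq]
  simp [TensorProduct.sum_tmul, TensorProduct.tmul_sum, map_sum,
    TensorProduct.tensorTensorTensorComm_tmul]
  rw [Finset.sum_comm]

lemma counit_act (c : C) (h : H) :
    Coalgebra.counit (R := k) (act (c ⊗ₜ h))
      = Coalgebra.counit (R := k) c * Coalgebra.counit (R := k) h := by
  have h1 := LinearMap.congr_fun hact.2.2.2 (c ⊗ₜ[k] h)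
  simpa [smul_eq_mul] using h1

lemma cv_act (u v : C →ₗ[k] H) :
    cv k (u ∘ₗ act) (v ∘ₗ act) = cv k u v ∘ₗ act := by
  refine TensorProduct.ext' fun c h => ?_
  rw [cvCH_apply k H C _ _ c h (ℛ k c) (ℛ k h), LinearMap.comp_apply, cv,
    LinearMap.comp_apply, LinearMap.comp_apply, comul_act_s13 k H C act hact c h (ℛ k c) (ℛ k h)]
  simp [map_sum]

lemma un_act : (un k : C →ₗ[k] H) ∘ₗ act = un k := by
  refine TensorProduct.ext' fun c h => ?_
  rw [LinearMap.comp_apply, un, LinearMap.comp_apply, counit_act k H C act hact,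
    unCH_tmul, Algebra.linearMap_apply, map_mul, ← Algebra.smul_def]

omit hact

lemma cv_uC_e (u : C →ₗ[k] H) : cv k (uCm k H C u) (eH k H C) = Mm k H C u := by
  refine TensorProduct.ext' fun c h => ?_
  rw [cvCH_apply k H C _ _ c h (ℛ k c) (ℛ k h), Mm_tmul]
  calc ∑ i ∈ (ℛ k c).index, ∑ j ∈ (ℛ k h).index,
        uCm k H C u ((ℛ k c).left i ⊗ₜ (ℛ k h).left j) *
          eH k H C ((ℛ k c).right i ⊗ₜ (ℛ k h).right j)
      = (∑ i ∈ (ℛ k c).index,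
            Coalgebra.counit (R := k) ((ℛ k c).right i) • u ((ℛ k c).left i)) *
        (∑ j ∈ (ℛ k h).index,
            Coalgebra.counit (R := k) ((ℛ k h).left j) • (ℛ k h).right j) := by
        rw [Finset.sum_mul_sum]
        refine Finset.sum_congr rfl fun i _ => Finset.sum_congr rfl fun j _ => ?_
        rw [uCm_tmul, eH_tmul, smul_mul_smul_comm,
          mul_comm (Coalgebra.counit (R := k) ((ℛ k h).left j)), ← smul_mul_smul_comm]
    _ = u c * h := by
        rw [sum_smul_counit k u c (ℛ k c), sum_counit_smul_self k h (ℛ k h)]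

lemma cv_Se_M (u : C →ₗ[k] H) :
    cv k ((HopfAlgebra.antipode k : H →ₗ[k] H) ∘ₗ eH k H C) (Mm k H C u) = Fmap k H C u := by
  refine TensorProduct.ext' fun c h => ?_
  rw [cvCH_apply k H C _ _ c h (ℛ k c) (ℛ k h), Fmap_apply k H C u c h (ℛ k h),
    Finset.sum_comm]
  refine Finset.sum_congr rfl fun j _ => ?_
  calc ∑ i ∈ (ℛ k c).index,
        ((HopfAlgebra.antipode k : H →ₗ[k] H) ∘ₗ eH k H C) ((ℛ k c).left i ⊗ₜ (ℛ k h).left j) *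
          Mm k H C u ((ℛ k c).right i ⊗ₜ (ℛ k h).right j)
      = ∑ i ∈ (ℛ k c).index, Coalgebra.counit (R := k) ((ℛ k c).left i) •
          ((LinearMap.mulLeft k (HopfAlgebra.antipode (R := k) ((ℛ k h).left j)) ∘ₗ
            LinearMap.mulRight k ((ℛ k h).right j) ∘ₗ u) ((ℛ k c).right i)) := by
        refine Finset.sum_congr rfl fun i _ => ?_
        simp [smul_mul_assoc, mul_assoc]
    _ = HopfAlgebra.antipode (R := k) ((ℛ k h).left j) * u c * (ℛ k h).right j := by
        rw [sum_counit_smul_s13 k _ c (ℛ k c)]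
        simp [mul_assoc]

lemma cv_e_Se :
    cv k (eH k H C) ((HopfAlgebra.antipode k : H →ₗ[k] H) ∘ₗ eH k H C) = un k := by
  refine TensorProduct.ext' fun c h => ?_
  rw [cvCH_apply k H C _ _ c h (ℛ k c) (ℛ k h), unCH_tmul]
  calc ∑ i ∈ (ℛ k c).index, ∑ j ∈ (ℛ k h).index,
        eH k H C ((ℛ k c).left i ⊗ₜ (ℛ k h).left j) *
          ((HopfAlgebra.antipode k : H →ₗ[k] H) ∘ₗ eH k H C)
            ((ℛ k c).right i ⊗ₜ (ℛ k h).right j)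
      = ∑ i ∈ (ℛ k c).index,
          (Coalgebra.counit (R := k) ((ℛ k c).left i) *
            Coalgebra.counit (R := k) ((ℛ k c).right i)) •
          ∑ j ∈ (ℛ k h).index,
            (ℛ k h).left j * HopfAlgebra.antipode (R := k) ((ℛ k h).right j) := by
        refine Finset.sum_congr rfl fun i _ => ?_
        rw [Finset.smul_sum]
        refine Finset.sum_congr rfl fun j _ => ?_
        simp only [eH_tmul, LinearMap.comp_apply, map_smul, smul_mul_smul_comm, smul_smul]
    _ = Coalgebra.counit (R := k) c •
          algebraMap k H (Coalgebra.counit (R := k) h) := by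
        rw [← Finset.sum_smul, sum_counit_counit k c (ℛ k c),
          HopfAlgebra.sum_mul_antipode_eq_algebraMap_counit (ℛ k h)]

lemma cv_Se_e :
    cv k ((HopfAlgebra.antipode k : H →ₗ[k] H) ∘ₗ eH k H C) (eH k H C) = un k := by
  refine TensorProduct.ext' fun c h => ?_
  rw [cvCH_apply k H C _ _ c h (ℛ k c) (ℛ k h), unCH_tmul]
  calc ∑ i ∈ (ℛ k c).index, ∑ j ∈ (ℛ k h).index,
        ((HopfAlgebra.antipode k : H →ₗ[k] H) ∘ₗ eH k H C)
            ((ℛ k c).left i ⊗ₜ (ℛ k h).left j) *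
          eH k H C ((ℛ k c).right i ⊗ₜ (ℛ k h).right j)
      = ∑ i ∈ (ℛ k c).index,
          (Coalgebra.counit (R := k) ((ℛ k c).left i) *
            Coalgebra.counit (R := k) ((ℛ k c).right i)) •
          ∑ j ∈ (ℛ k h).index,
            HopfAlgebra.antipode (R := k) ((ℛ k h).left j) * (ℛ k h).right j := by
        refine Finset.sum_congr rfl fun i _ => ?_
        rw [Finset.smul_sum]
        refine Finset.sum_congr rfl fun j _ => ?_
        simp only [eH_tmul, LinearMap.comp_apply, map_smul, smul_mul_smul_comm, smul_smul]
    _ = Coalgebra.counit (R := k) c •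
          algebraMap k H (Coalgebra.counit (R := k) h) := by
        rw [← Finset.sum_smul, sum_counit_counit k c (ℛ k c),
          HopfAlgebra.sum_antipode_mul_eq_algebraMap_counit (ℛ k h)]

lemma cv_uC_vC (u v : C →ₗ[k] H) :
    cv k (uCm k H C u) (uCm k H C v) = uCm k H C (cv k u v) := by
  refine TensorProduct.ext' fun c h => ?_
  rw [cvCH_apply k H C _ _ c h (ℛ k c) (ℛ k h), uCm_tmul, cv_apply k u v c (ℛ k c)]
  rw [Finset.sum_comm]
  calc ∑ j ∈ (ℛ k h).index, ∑ i ∈ (ℛ k c).index,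
        uCm k H C u ((ℛ k c).left i ⊗ₜ (ℛ k h).left j) *
          uCm k H C v ((ℛ k c).right i ⊗ₜ (ℛ k h).right j)
      = ∑ j ∈ (ℛ k h).index,
          (Coalgebra.counit (R := k) ((ℛ k h).left j) *
            Coalgebra.counit (R := k) ((ℛ k h).right j)) •
          ∑ i ∈ (ℛ k c).index, u ((ℛ k c).left i) * v ((ℛ k c).right i) := by
        refine Finset.sum_congr rfl fun j _ => ?_
        rw [Finset.smul_sum]
        refine Finset.sum_congr rfl fun i _ => ?_
        rw [uCm_tmul, uCm_tmul, smul_mul_smul_comm]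
    _ = Coalgebra.counit (R := k) h •
          ∑ i ∈ (ℛ k c).index, u ((ℛ k c).left i) * v ((ℛ k c).right i) := by
        rw [← Finset.sum_smul, sum_counit_counit k h (ℛ k h)]

lemma uC_un : uCm k H C (un k) = un k := by
  refine TensorProduct.ext' fun c h => ?_
  rw [uCm_tmul, unCH_tmul, un, LinearMap.comp_apply, Algebra.linearMap_apply,
    Algebra.smul_def, Algebra.smul_def, ← map_mul, ← map_mul, mul_comm]

lemma Fmap_mul (u v : C →ₗ[k] H) :
    cv k (Fmap k H C u) (Fmap k H C v) = Fmap k H C (cv k u v) := by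
  rw [← cv_Se_M, ← cv_Se_M, ← cv_Se_M, ← cv_uC_e, ← cv_uC_e, ← cv_uC_e, ← cv_uC_vC]
  set S := (HopfAlgebra.antipode k : H →ₗ[k] H) ∘ₗ eH k H C with hS
  set e := eH k H C with he
  set a := uCm k H C u
  set b := uCm k H C v
  calc cv k (cv k S (cv k a e)) (cv k S (cv k b e))
      = cv k S (cv k a (cv k e (cv k S (cv k b e)))) := by simp only [cv_assoc]
    _ = cv k S (cv k a (cv k (cv k e S) (cv k b e))) := by rw [cv_assoc]
    _ = cv k S (cv k a (cv k b e)) := by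
        rw [hS, he, cv_e_Se k H C, cv_un_left]
    _ = cv k S (cv k (cv k a b) e) := by rw [cv_assoc]

lemma Fmap_un : Fmap k H C (un k) = un k := by
  rw [← cv_Se_M, ← cv_uC_e, uC_un, cv_un_left]
  exact cv_Se_e k H C


lemma Lact_assoc (u v : C →ₗ[k] H) (x : C →ₗ[k] H ⊗[k] C) :
    Lact k H C u (Lact k H C v x) = Lact k H C (cv k u v) x := by
  ext c
  have key := coassoc_sum k
    (Lmul k H C ∘ₗ TensorProduct.map u (Lmul k H C ∘ₗ TensorProduct.map v x)) c
  simp only [LinearMap.comp_apply, TensorProduct.map_tmul] at key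
  rw [Lact_apply k H C u _ c (ℛ k c), Lact_apply k H C (cv k u v) x c (ℛ k c)]
  calc ∑ i ∈ (ℛ k c).index, Lmul k H C (u ((ℛ k c).left i) ⊗ₜ
        Lact k H C v x ((ℛ k c).right i))
      = ∑ i ∈ (ℛ k c).index, ∑ j ∈ (ℛ k ((ℛ k c).right i)).index,
          Lmul k H C (u ((ℛ k c).left i) ⊗ₜ
            Lmul k H C (v ((ℛ k ((ℛ k c).right i)).left j) ⊗ₜ
              x ((ℛ k ((ℛ k c).right i)).right j))) := by
        refine Finset.sum_congr rfl fun i _ => ?_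
        rw [Lact_apply k H C v x _ (ℛ k ((ℛ k c).right i)), TensorProduct.tmul_sum, map_sum]
    _ = ∑ i ∈ (ℛ k c).index, ∑ j ∈ (ℛ k ((ℛ k c).left i)).index,
          Lmul k H C (u ((ℛ k ((ℛ k c).left i)).left j) ⊗ₜ
            Lmul k H C (v ((ℛ k ((ℛ k c).left i)).right j) ⊗ₜ x ((ℛ k c).right i))) :=
        key.symm
    _ = ∑ i ∈ (ℛ k c).index,
          Lmul k H C (cv k u v ((ℛ k c).left i) ⊗ₜ x ((ℛ k c).right i)) := by
        refine Finset.sum_congr rfl fun i _ => ?_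
        rw [cv_apply k u v _ (ℛ k ((ℛ k c).left i)), TensorProduct.sum_tmul, map_sum]
        exact Finset.sum_congr rfl fun j _ => Lmul_mul k H C _ _ _

lemma Lact_un (x : C →ₗ[k] H ⊗[k] C) : Lact k H C (un k) x = x := by
  ext c
  rw [Lact_apply k H C _ x c (ℛ k c)]
  calc ∑ i ∈ (ℛ k c).index, Lmul k H C (un k ((ℛ k c).left i) ⊗ₜ x ((ℛ k c).right i))
      = ∑ i ∈ (ℛ k c).index,
          Coalgebra.counit (R := k) ((ℛ k c).left i) • x ((ℛ k c).right i) := by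
        refine Finset.sum_congr rfl fun i _ => ?_
        rw [un, LinearMap.comp_apply, Algebra.linearMap_apply, Algebra.algebraMap_eq_smul_one,
          ← TensorProduct.smul_tmul', map_smul, Lmul_one]
    _ = x c := sum_counit_smul_s13 k x c (ℛ k c)

lemma idT_Lact (g : C →ₗ[k] C) (v : C →ₗ[k] H) (x : C →ₗ[k] H ⊗[k] C) :
    TensorProduct.map LinearMap.id g ∘ₗ Lact k H C v x
      = Lact k H C v (TensorProduct.map LinearMap.id g ∘ₗ x) := by
  ext c
  rw [LinearMap.comp_apply, Lact_apply k H C v x c (ℛ k c),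
    Lact_apply k H C v _ c (ℛ k c), map_sum]
  exact Finset.sum_congr rfl fun i _ => idT_Lmul k H C g _ _

include hact

lemma Ract_assoc (x : C →ₗ[k] H ⊗[k] C) (a b : C →ₗ[k] H ⊗[k] H) :
    Ract k H C act (Ract k H C act x a) b = Ract k H C act x (cv k a b) := by
  ext c
  have key := coassoc_sum k
    (Rmul k H C act ∘ₗ TensorProduct.map x (LinearMap.mul' k (H ⊗[k] H) ∘ₗ
      TensorProduct.map a b)) c
  simp only [LinearMap.comp_apply, TensorProduct.map_tmul, LinearMap.mul'_apply] at key
  rw [Ract_apply k H C act _ b c (ℛ k c), Ract_apply k H C act x (cv k a b) c (ℛ k c)]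
  calc ∑ i ∈ (ℛ k c).index,
        Rmul k H C act (Ract k H C act x a ((ℛ k c).left i) ⊗ₜ b ((ℛ k c).right i))
      = ∑ i ∈ (ℛ k c).index, ∑ j ∈ (ℛ k ((ℛ k c).left i)).index,
          Rmul k H C act (x ((ℛ k ((ℛ k c).left i)).left j) ⊗ₜ
            (a ((ℛ k ((ℛ k c).left i)).right j) * b ((ℛ k c).right i))) := by
        refine Finset.sum_congr rfl fun i _ => ?_
        rw [Ract_apply k H C act x a _ (ℛ k ((ℛ k c).left i)), TensorProduct.sum_tmul, map_sum]
        exact Finset.sum_congr rfl fun j _ => Rmul_mul k H C act hact _ _ _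
    _ = ∑ i ∈ (ℛ k c).index, ∑ j ∈ (ℛ k ((ℛ k c).right i)).index,
          Rmul k H C act (x ((ℛ k c).left i) ⊗ₜ
            (a ((ℛ k ((ℛ k c).right i)).left j) * b ((ℛ k ((ℛ k c).right i)).right j))) :=
        key
    _ = ∑ i ∈ (ℛ k c).index,
          Rmul k H C act (x ((ℛ k c).left i) ⊗ₜ cv k a b ((ℛ k c).right i)) := by
        refine Finset.sum_congr rfl fun i _ => ?_
        rw [cv_apply k a b _ (ℛ k ((ℛ k c).right i)), TensorProduct.tmul_sum, map_sum]

lemma Ract_one (x : C →ₗ[k] H ⊗[k] C) :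
    Ract k H C act x (Coalgebra.comul ∘ₗ un k) = x := by
  ext c
  rw [Ract_apply k H C act x _ c (ℛ k c)]
  calc ∑ i ∈ (ℛ k c).index, Rmul k H C act
        (x ((ℛ k c).left i) ⊗ₜ (Coalgebra.comul ∘ₗ un k) ((ℛ k c).right i))
      = ∑ i ∈ (ℛ k c).index,
          Coalgebra.counit (R := k) ((ℛ k c).right i) • x ((ℛ k c).left i) := by
        refine Finset.sum_congr rfl fun i _ => ?_
        rw [un, LinearMap.comp_apply, LinearMap.comp_apply, Algebra.linearMap_apply,
          Algebra.algebraMap_eq_smul_one, map_smul, Bialgebra.comul_one,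
          Algebra.TensorProduct.one_def, TensorProduct.tmul_smul, map_smul,
          Rmul_one k H C act hact]
    _ = x c := sum_smul_counit k x c (ℛ k c)

omit hact

lemma comul_cv (u v : C →ₗ[k] H) :
    (Coalgebra.comul : H →ₗ[k] H ⊗[k] H) ∘ₗ cv k u v
      = cv k (Coalgebra.comul ∘ₗ u) (Coalgebra.comul ∘ₗ v) := by
  ext c
  rw [LinearMap.comp_apply, cv_apply k u v c (ℛ k c), cv_apply k _ _ c (ℛ k c), map_sum]
  exact Finset.sum_congr rfl fun i _ => Bialgebra.comul_mul _ _

lemma Ract_Lact (v : C →ₗ[k] H) (y : C →ₗ[k] H ⊗[k] C) (a : C →ₗ[k] H ⊗[k] H) :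
    Ract k H C act (Lact k H C v y) a = Lact k H C v (Ract k H C act y a) := by
  ext c
  have key := coassoc_sum k
    (Lmul k H C ∘ₗ TensorProduct.map v (Rmul k H C act ∘ₗ TensorProduct.map y a)) c
  simp only [LinearMap.comp_apply, TensorProduct.map_tmul] at key
  rw [Ract_apply k H C act _ a c (ℛ k c), Lact_apply k H C v _ c (ℛ k c)]
  calc ∑ i ∈ (ℛ k c).index,
        Rmul k H C act (Lact k H C v y ((ℛ k c).left i) ⊗ₜ a ((ℛ k c).right i))
      = ∑ i ∈ (ℛ k c).index, ∑ j ∈ (ℛ k ((ℛ k c).left i)).index,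
          Lmul k H C (v ((ℛ k ((ℛ k c).left i)).left j) ⊗ₜ
            Rmul k H C act (y ((ℛ k ((ℛ k c).left i)).right j) ⊗ₜ a ((ℛ k c).right i))) := by
        refine Finset.sum_congr rfl fun i _ => ?_
        rw [Lact_apply k H C v y _ (ℛ k ((ℛ k c).left i)), TensorProduct.sum_tmul, map_sum]
        exact Finset.sum_congr rfl fun j _ => Rmul_Lmul k H C act _ _ _
    _ = ∑ i ∈ (ℛ k c).index, ∑ j ∈ (ℛ k ((ℛ k c).right i)).index,
          Lmul k H C (v ((ℛ k c).left i) ⊗ₜ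
            Rmul k H C act (y ((ℛ k ((ℛ k c).right i)).left j) ⊗ₜ
              a ((ℛ k ((ℛ k c).right i)).right j))) := key
    _ = ∑ i ∈ (ℛ k c).index,
          Lmul k H C (v ((ℛ k c).left i) ⊗ₜ Ract k H C act y a ((ℛ k c).right i)) := by
        refine Finset.sum_congr rfl fun i _ => ?_
        rw [Ract_apply k H C act y a _ (ℛ k ((ℛ k c).right i)), TensorProduct.tmul_sum, map_sum]

lemma idT_Ract (g : C →ₗ[k] C) (hg : ∀ (c : C) (h : H), g (act (c ⊗ₜ h)) = act (g c ⊗ₜ h))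
    (x : C →ₗ[k] H ⊗[k] C) (a : C →ₗ[k] H ⊗[k] H) :
    TensorProduct.map LinearMap.id g ∘ₗ Ract k H C act x a
      = Ract k H C act (TensorProduct.map LinearMap.id g ∘ₗ x) a := by
  ext c
  rw [LinearMap.comp_apply, Ract_apply k H C act x a c (ℛ k c),
    Ract_apply k H C act _ a c (ℛ k c), map_sum]
  exact Finset.sum_congr rfl fun i _ => idT_Rmul k H C act g hg _ _

include hact

lemma psiV_un : psiV k H C act (un k) = LinearMap.id := by
  ext c
  rw [psiV_apply_s13 k H C act _ c (ℛ k c)]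
  calc ∑ i ∈ (ℛ k c).index, act ((ℛ k c).left i ⊗ₜ un k ((ℛ k c).right i))
      = ∑ i ∈ (ℛ k c).index,
          Coalgebra.counit (R := k) ((ℛ k c).right i) • (ℛ k c).left i := by
        refine Finset.sum_congr rfl fun i _ => ?_
        rw [un, LinearMap.comp_apply, Algebra.linearMap_apply,
          Algebra.algebraMap_eq_smul_one, TensorProduct.tmul_smul, map_smul, hact.1]
    _ = c := sum_smul_counit_self k c (ℛ k c)

omit hact

lemma hopf_aux (X : H) (h : H) :
    ∑ j ∈ (ℛ k h).index, ∑ m ∈ (ℛ k ((ℛ k h).right j)).index,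
      (ℛ k h).left j *
        ((HopfAlgebra.antipode (R := k) ((ℛ k ((ℛ k h).right j)).left m) * X) *
          (ℛ k ((ℛ k h).right j)).right m)
      = X * h := by
  have key := coassoc_sum k
    (LinearMap.mul' k H ∘ₗ TensorProduct.map LinearMap.id
      (LinearMap.mul' k H ∘ₗ TensorProduct.map
        (LinearMap.mulRight k X ∘ₗ (HopfAlgebra.antipode k : H →ₗ[k] H)) LinearMap.id)) h
  simp only [LinearMap.comp_apply, TensorProduct.map_tmul, LinearMap.mul'_apply,
    LinearMap.id_coe, id_eq, LinearMap.mulRight_apply] at key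
  rw [← key]
  calc ∑ j ∈ (ℛ k h).index, ∑ m ∈ (ℛ k ((ℛ k h).left j)).index,
        (ℛ k ((ℛ k h).left j)).left m *
          ((HopfAlgebra.antipode (R := k) ((ℛ k ((ℛ k h).left j)).right m) * X) *
            (ℛ k h).right j)
      = ∑ j ∈ (ℛ k h).index,
          (∑ m ∈ (ℛ k ((ℛ k h).left j)).index,
            (ℛ k ((ℛ k h).left j)).left m *
              HopfAlgebra.antipode (R := k) ((ℛ k ((ℛ k h).left j)).right m)) *
            (X * (ℛ k h).right j) := by
        refine Finset.sum_congr rfl fun j _ => ?_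
        rw [Finset.sum_mul]
        refine Finset.sum_congr rfl fun m _ => by simp only [mul_assoc]
    _ = ∑ j ∈ (ℛ k h).index,
          Coalgebra.counit (R := k) ((ℛ k h).left j) • (X * (ℛ k h).right j) := by
        refine Finset.sum_congr rfl fun j _ => ?_
        rw [HopfAlgebra.sum_mul_antipode_eq_algebraMap_counit (ℛ k ((ℛ k h).left j)), Algebra.smul_def]
    _ = X * h := sum_counit_smul_s13 k (LinearMap.mulLeft k X) h (ℛ k h)


include hact

lemma psiV_act (v : C →ₗ[k] H) (hv21 : v ∘ₗ act = Fmap k H C v) (c : C) (h : H) :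
    psiV k H C act v (act (c ⊗ₜ h)) = act (psiV k H C act v c ⊗ₜ h) := by
  have hv : ∀ (c' : C) (h' : H), v (act (c' ⊗ₜ h')) = Fmap k H C v (c' ⊗ₜ h') :=
    fun c' h' => LinearMap.congr_fun hv21 (c' ⊗ₜ h')
  have hL : psiV k H C act v (act (c ⊗ₜ h))
      = ∑ i ∈ (ℛ k c).index, ∑ j ∈ (ℛ k h).index,
          act (act ((ℛ k c).left i ⊗ₜ (ℛ k h).left j) ⊗ₜ
            v (act ((ℛ k c).right i ⊗ₜ (ℛ k h).right j))) := by
    rw [psiV, LinearMap.comp_apply, LinearMap.comp_apply,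
      comul_act_s13 k H C act hact c h (ℛ k c) (ℛ k h)]
    simp only [map_sum, TensorProduct.map_tmul, LinearMap.id_coe, id_eq]
  rw [hL, psiV_apply_s13 k H C act v c (ℛ k c), TensorProduct.sum_tmul, map_sum]
  calc ∑ i ∈ (ℛ k c).index, ∑ j ∈ (ℛ k h).index,
        act (act ((ℛ k c).left i ⊗ₜ (ℛ k h).left j) ⊗ₜ
          v (act ((ℛ k c).right i ⊗ₜ (ℛ k h).right j)))
      = ∑ i ∈ (ℛ k c).index, ∑ j ∈ (ℛ k h).index,
          ∑ m ∈ (ℛ k ((ℛ k h).right j)).index,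
            act ((ℛ k c).left i ⊗ₜ ((ℛ k h).left j *
              ((HopfAlgebra.antipode (R := k) ((ℛ k ((ℛ k h).right j)).left m) *
                  v ((ℛ k c).right i)) *
                (ℛ k ((ℛ k h).right j)).right m))) := by
        refine Finset.sum_congr rfl fun i _ => Finset.sum_congr rfl fun j _ => ?_
        rw [hv, Fmap_apply k H C v _ _ (ℛ k ((ℛ k h).right j)),
          TensorProduct.tmul_sum, map_sum]
        refine Finset.sum_congr rfl fun m _ => ?_
        rw [hact.2.1]
    _ = ∑ i ∈ (ℛ k c).index, act ((ℛ k c).left i ⊗ₜ (v ((ℛ k c).right i) * h)) := by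
        refine Finset.sum_congr rfl fun i _ => ?_
        rw [← hopf_aux k H (v ((ℛ k c).right i)) h, TensorProduct.tmul_sum, map_sum]
        refine Finset.sum_congr rfl fun j _ => ?_
        rw [TensorProduct.tmul_sum, map_sum]
    _ = ∑ i ∈ (ℛ k c).index,
          act (act ((ℛ k c).left i ⊗ₜ v ((ℛ k c).right i)) ⊗ₜ h) := by
        exact Finset.sum_congr rfl fun i _ => (hact.2.1 _ _ _).symm

lemma psiV_comp (u v : C →ₗ[k] H) (hu21 : u ∘ₗ act = Fmap k H C u) :
    psiV k H C act u ∘ₗ psiV k H C act v = psiV k H C act (cv k u v) := by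
  ext c
  have key := coassoc_sum k (act ∘ₗ TensorProduct.map LinearMap.id
    (LinearMap.mul' k H ∘ₗ TensorProduct.map u v)) c
  simp only [LinearMap.comp_apply, TensorProduct.map_tmul, LinearMap.mul'_apply,
    LinearMap.id_coe, id_eq] at key
  rw [LinearMap.comp_apply, psiV_apply_s13 k H C act v c (ℛ k c), map_sum,
    psiV_apply_s13 k H C act (cv k u v) c (ℛ k c)]
  calc ∑ i ∈ (ℛ k c).index,
        psiV k H C act u (act ((ℛ k c).left i ⊗ₜ v ((ℛ k c).right i)))
      = ∑ i ∈ (ℛ k c).index,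
          act (psiV k H C act u ((ℛ k c).left i) ⊗ₜ v ((ℛ k c).right i)) :=
        Finset.sum_congr rfl fun i _ => psiV_act k H C act hact u hu21 _ _
    _ = ∑ i ∈ (ℛ k c).index, ∑ m ∈ (ℛ k ((ℛ k c).left i)).index,
          act (act ((ℛ k ((ℛ k c).left i)).left m ⊗ₜ
            u ((ℛ k ((ℛ k c).left i)).right m)) ⊗ₜ v ((ℛ k c).right i)) := by
        refine Finset.sum_congr rfl fun i _ => ?_
        rw [psiV_apply_s13 k H C act u _ (ℛ k ((ℛ k c).left i)), TensorProduct.sum_tmul, map_sum]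
    _ = ∑ i ∈ (ℛ k c).index, ∑ m ∈ (ℛ k ((ℛ k c).left i)).index,
          act ((ℛ k ((ℛ k c).left i)).left m ⊗ₜ
            (u ((ℛ k ((ℛ k c).left i)).right m) * v ((ℛ k c).right i))) :=
        Finset.sum_congr rfl fun i _ => Finset.sum_congr rfl fun m _ => hact.2.1 _ _ _
    _ = ∑ i ∈ (ℛ k c).index, ∑ m ∈ (ℛ k ((ℛ k c).right i)).index,
          act ((ℛ k c).left i ⊗ₜ (u ((ℛ k ((ℛ k c).right i)).left m) *
            v ((ℛ k ((ℛ k c).right i)).right m))) := key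
    _ = ∑ i ∈ (ℛ k c).index, act ((ℛ k c).left i ⊗ₜ cv k u v ((ℛ k c).right i)) := by
        refine Finset.sum_congr rfl fun i _ => ?_
        rw [cv_apply k u v _ (ℛ k ((ℛ k c).right i)), TensorProduct.tmul_sum, map_sum]

omit hact

lemma counit_cv (u v : C →ₗ[k] H) :
    (Coalgebra.counit : H →ₗ[k] k) ∘ₗ cv k u v
      = cv k ((Coalgebra.counit : H →ₗ[k] k) ∘ₗ u) (Coalgebra.counit ∘ₗ v) := by
  ext c
  rw [LinearMap.comp_apply, cv_apply k u v c (ℛ k c), cv_apply k _ _ c (ℛ k c), map_sum]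
  exact Finset.sum_congr rfl fun i _ => Bialgebra.counit_mul _ _

lemma un_k_eq : (un k : C →ₗ[k] k) = Coalgebra.counit := by
  ext c
  simp [un, Algebra.linearMap_apply]

lemma counit_un : (Coalgebra.counit : H →ₗ[k] k) ∘ₗ (un k : C →ₗ[k] H)
    = Coalgebra.counit := by
  ext c
  simp [un, Algebra.linearMap_apply, Bialgebra.counit_algebraMap]


lemma Fmap_def (v : C →ₗ[k] H) :
    Fmap k H C v = sandwichA k H
      ∘ₗ TensorProduct.map v
          (TensorProduct.map (HopfAlgebra.antipode k : H →ₗ[k] H) LinearMap.id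
            ∘ₗ Coalgebra.comul) := rfl

lemma convH_eq (u v : C →ₗ[k] H) : convH k H C u v = cv k u v := rfl

lemma unitH_eq : unitH k H C = un k := rfl

lemma idT_comp (g g' : C →ₗ[k] C) (x : C →ₗ[k] H ⊗[k] C) :
    TensorProduct.map LinearMap.id g ∘ₗ (TensorProduct.map LinearMap.id g' ∘ₗ x)
      = TensorProduct.map LinearMap.id (g ∘ₗ g') ∘ₗ x := by
  rw [← LinearMap.comp_assoc, ← TensorProduct.map_comp, LinearMap.comp_id]

lemma idT_id (x : C →ₗ[k] H ⊗[k] C) :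
    TensorProduct.map LinearMap.id LinearMap.id ∘ₗ x = x := by
  rw [TensorProduct.map_id, LinearMap.id_comp]

include hact

lemma transfer21 (v w : C →ₗ[k] H) (hvw : cv k v w = un k) (hwv : cv k w v = un k)
    (hv21 : v ∘ₗ act = Fmap k H C v) : w ∘ₗ act = Fmap k H C w := by
  have h1 : cv k (v ∘ₗ act) (w ∘ₗ act) = un k := by
    rw [cv_act k H C act hact, hvw, un_act k H C act hact]
  have h2 : cv k (Fmap k H C w) (Fmap k H C v) = un k := by
    rw [Fmap_mul, hwv, Fmap_un]
  calc w ∘ₗ act = cv k (un k) (w ∘ₗ act) := (cv_un_left k _).symm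
    _ = cv k (cv k (Fmap k H C w) (Fmap k H C v)) (w ∘ₗ act) := by rw [h2]
    _ = cv k (Fmap k H C w) (cv k (v ∘ₗ act) (w ∘ₗ act)) := by rw [cv_assoc, hv21]
    _ = Fmap k H C w := by rw [h1, cv_un_right]

omit hact

lemma transfer20 (v w : C →ₗ[k] H) (hvw : cv k v w = un k)
    (hv20 : (Coalgebra.counit : H →ₗ[k] k) ∘ₗ v = Coalgebra.counit) :
    (Coalgebra.counit : H →ₗ[k] k) ∘ₗ w = Coalgebra.counit := by
  calc (Coalgebra.counit : H →ₗ[k] k) ∘ₗ w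
      = cv k (un k) ((Coalgebra.counit : H →ₗ[k] k) ∘ₗ w) := (cv_un_left k _).symm
    _ = cv k ((Coalgebra.counit : H →ₗ[k] k) ∘ₗ v) (Coalgebra.counit ∘ₗ w) := by
        rw [un_k_eq, ← hv20]
    _ = (Coalgebra.counit : H →ₗ[k] k) ∘ₗ cv k v w := (counit_cv k H C v w).symm
    _ = Coalgebra.counit := by rw [hvw, counit_un]

include hact

lemma transfer22 (τ lam : C →ₗ[k] H ⊗[k] C) (v w : C →ₗ[k] H)
    (hvw : cv k v w = un k) (hwv : cv k w v = un k)
    (hv21 : v ∘ₗ act = Fmap k H C v) (hw21 : w ∘ₗ act = Fmap k H C w)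
    (hv22 : Ract k H C act lam (Coalgebra.comul ∘ₗ v)
      = Lact k H C v (TensorProduct.map LinearMap.id (psiV k H C act v) ∘ₗ τ)) :
    Ract k H C act τ (Coalgebra.comul ∘ₗ w)
      = Lact k H C w (TensorProduct.map LinearMap.id (psiV k H C act w) ∘ₗ lam) := by
  have hgw : ∀ (c : C) (h : H),
      psiV k H C act w (act (c ⊗ₜ h)) = act (psiV k H C act w c ⊗ₜ h) :=
    psiV_act k H C act hact w hw21
  set Tv := TensorProduct.map LinearMap.id (psiV k H C act v) ∘ₗ τ with hTv
  have hA : Ract k H C act (Lact k H C v Tv) (Coalgebra.comul ∘ₗ w) = lam := by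
    rw [← hv22, Ract_assoc k H C act hact, ← comul_cv, hvw,
      Ract_one k H C act hact]
  have hB : Lact k H C w lam = Ract k H C act Tv (Coalgebra.comul ∘ₗ w) := by
    calc Lact k H C w lam
        = Lact k H C w (Ract k H C act (Lact k H C v Tv) (Coalgebra.comul ∘ₗ w)) := by
          rw [hA]
      _ = Lact k H C w (Lact k H C v (Ract k H C act Tv (Coalgebra.comul ∘ₗ w))) := by
          rw [Ract_Lact]
      _ = Lact k H C (cv k w v) (Ract k H C act Tv (Coalgebra.comul ∘ₗ w)) :=
          Lact_assoc k H C w v _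
      _ = Ract k H C act Tv (Coalgebra.comul ∘ₗ w) := by rw [hwv, Lact_un]
  have hψ : psiV k H C act w ∘ₗ psiV k H C act v = LinearMap.id := by
    rw [psiV_comp k H C act hact w v hw21, hwv, psiV_un k H C act hact]
  calc Ract k H C act τ (Coalgebra.comul ∘ₗ w)
      = Ract k H C act (TensorProduct.map LinearMap.id (psiV k H C act w) ∘ₗ Tv)
          (Coalgebra.comul ∘ₗ w) := by
        rw [hTv, idT_comp, hψ, idT_id]
    _ = TensorProduct.map LinearMap.id (psiV k H C act w)
          ∘ₗ Ract k H C act Tv (Coalgebra.comul ∘ₗ w) :=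
        (idT_Ract k H C act (psiV k H C act w) hgw Tv _).symm
    _ = TensorProduct.map LinearMap.id (psiV k H C act w) ∘ₗ Lact k H C w lam := by
        rw [hB]
    _ = Lact k H C w (TensorProduct.map LinearMap.id (psiV k H C act w) ∘ₗ lam) :=
        idT_Lact k H C (psiV k H C act w) w lam

lemma comp22 (τ lam mu : C →ₗ[k] H ⊗[k] C) (v v₂ : C →ₗ[k] H)
    (h2_21 : v₂ ∘ₗ act = Fmap k H C v₂)
    (h1 : Ract k H C act lam (Coalgebra.comul ∘ₗ v)
      = Lact k H C v (TensorProduct.map LinearMap.id (psiV k H C act v) ∘ₗ τ))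
    (h2 : Ract k H C act mu (Coalgebra.comul ∘ₗ v₂)
      = Lact k H C v₂ (TensorProduct.map LinearMap.id (psiV k H C act v₂) ∘ₗ lam)) :
    Ract k H C act mu (Coalgebra.comul ∘ₗ cv k v₂ v)
      = Lact k H C (cv k v₂ v)
          (TensorProduct.map LinearMap.id (psiV k H C act (cv k v₂ v)) ∘ₗ τ) := by
  have hgv₂ : ∀ (c : C) (h : H),
      psiV k H C act v₂ (act (c ⊗ₜ h)) = act (psiV k H C act v₂ c ⊗ₜ h) :=
    psiV_act k H C act hact v₂ h2_21
  calc Ract k H C act mu (Coalgebra.comul ∘ₗ cv k v₂ v)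
      = Ract k H C act (Ract k H C act mu (Coalgebra.comul ∘ₗ v₂))
          (Coalgebra.comul ∘ₗ v) := by
        rw [comul_cv, Ract_assoc k H C act hact]
    _ = Lact k H C v₂ (Ract k H C act
          (TensorProduct.map LinearMap.id (psiV k H C act v₂) ∘ₗ lam)
          (Coalgebra.comul ∘ₗ v)) := by rw [h2, Ract_Lact]
    _ = Lact k H C v₂ (TensorProduct.map LinearMap.id (psiV k H C act v₂)
          ∘ₗ Ract k H C act lam (Coalgebra.comul ∘ₗ v)) := by
        rw [idT_Ract k H C act (psiV k H C act v₂) hgv₂]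
    _ = Lact k H C v₂ (Lact k H C v (TensorProduct.map LinearMap.id (psiV k H C act v₂)
          ∘ₗ (TensorProduct.map LinearMap.id (psiV k H C act v) ∘ₗ τ))) := by
        rw [h1, idT_Lact]
    _ = Lact k H C (cv k v₂ v)
          (TensorProduct.map LinearMap.id (psiV k H C act (cv k v₂ v)) ∘ₗ τ) := by
        rw [idT_comp, Lact_assoc, psiV_comp k H C act hact v₂ v h2_21]

end Machinery

end TwistPaper

/-- Lemma 2.4a: the relation `τ ∼ λ` (existence of a convolution
invertible `v : C → H` satisfying (20)–(22)) is an equivalence relation on the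
set of twistings of `C`. -/
theorem TwistPaper.twistEquiv_equivalence
    (act : C ⊗[k] H →ₗ[k] C) (hact : IsModuleCoalg k H C act) :
    Equivalence (fun τ lam : {τ : C →ₗ[k] H ⊗[k] C // IsTwisting k H C act τ} =>
      TwistEquiv k H C act τ.1 lam.1) := by
  constructor
  · intro x
    refine ⟨un k, un k, cv_un_left k (un k), cv_un_left k (un k),
      counit_un k H C, ?_, ?_⟩
    · show (un k : C →ₗ[k] H) ∘ₗ act = Fmap k H C (un k)
      rw [un_act k H C act hact, Fmap_un]
    · show Ract k H C act x.1 (Coalgebra.comul ∘ₗ un k)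
        = Lact k H C (un k)
            (TensorProduct.map LinearMap.id (psiV k H C act (un k)) ∘ₗ x.1)
      rw [Ract_one k H C act hact, psiV_un k H C act hact, idT_id, Lact_un]
  · intro x y h
    obtain ⟨v, w, hvw, hwv, hV⟩ := h
    have h20 := hV.1
    have h21 := hV.2.1
    have h22 := hV.2.2
    have hvw' : cv k v w = un k := hvw
    have hwv' : cv k w v = un k := hwv
    have h21' : v ∘ₗ act = Fmap k H C v := h21
    have hw21 : w ∘ₗ act = Fmap k H C w :=
      transfer21 k H C act hact v w hvw' hwv' h21'
    exact ⟨w, v, hwv, hvw, transfer20 k H C v w hvw' h20, hw21,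
      transfer22 k H C act hact x.1 y.1 v w hvw' hwv' h21' hw21 h22⟩
  · intro x y z h g
    obtain ⟨v, w, hvw, hwv, hV⟩ := h
    obtain ⟨v₂, w₂, hv₂, hw₂, gV⟩ := g
    have h20 := hV.1
    have h21 := hV.2.1
    have h22 := hV.2.2
    have g20 := gV.1
    have g21 := gV.2.1
    have g22 := gV.2.2
    have hvw' : cv k v w = un k := hvw
    have hv₂' : cv k v₂ w₂ = un k := hv₂
    have hw₂' : cv k w₂ v₂ = un k := hw₂
    have h21' : v ∘ₗ act = Fmap k H C v := h21
    have g21' : v₂ ∘ₗ act = Fmap k H C v₂ := g21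
    refine ⟨cv k v₂ v, cv k w w₂, ?_, ?_, ?_, ?_, ?_⟩
    · show cv k (cv k v₂ v) (cv k w w₂) = un k
      rw [cv_assoc, ← cv_assoc k v w w₂, hvw', cv_un_left, hv₂']
    · show cv k (cv k w w₂) (cv k v₂ v) = un k
      rw [cv_assoc, ← cv_assoc k w₂ v₂ v, hw₂', cv_un_left,
        (show cv k w v = un k from hwv)]
    · show (Coalgebra.counit : H →ₗ[k] k) ∘ₗ cv k v₂ v = Coalgebra.counit
      rw [counit_cv,
        (show (Coalgebra.counit : H →ₗ[k] k) ∘ₗ v₂ = Coalgebra.counit from g20),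
        (show (Coalgebra.counit : H →ₗ[k] k) ∘ₗ v = Coalgebra.counit from h20),
        ← un_k_eq, cv_un_left, un_k_eq]
    · show cv k v₂ v ∘ₗ act = Fmap k H C (cv k v₂ v)
      rw [← cv_act k H C act hact, g21', h21', Fmap_mul]
    · exact comp22 k H C act hact x.1 y.1 z.1 v v₂ g21' h22 g22
end
end
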